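/- arXiv:2211.00290 — 6 statements merged into one kernel-verified Lean document; each statement's English description precedes it below -/
import Mathlib

section
/- Let T₁, …, Tₙ be bounded linear operators on a complex Hilbert space H and f : [0,∞) → [0,∞) a continuous strictly increasing convex function. Then ω_f(T₁, …, Tₙ) ≥ (1/n) max₁≤j≤n ω(Tⱼ) ≥ (1/(2n)) max₁≤j≤n ‖Tⱼ‖, where ω_f(T₁,…,Tₙ) = sup over unit vectors x of f⁻¹(∑ⱼ f(|⟨Tⱼx, x⟩|)). -/
section Aux

variable {H : Type*} [NormedAddCommGroup H] [InnerProductSpace ℂ H]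

/-- Surjectivity of `f` onto `[0, ∞)` from convexity + strict monotonicity + continuity. -/
lemma aux_exists_f_eq (f : ℝ → ℝ)
    (hf_cont : ContinuousOn f (Set.Ici 0))
    (hf_mono : StrictMonoOn f (Set.Ici 0))
    (hconv : ConvexOn ℝ (Set.Ici 0) f)
    (hf0 : f 0 = 0) :
    ∀ S : ℝ, 0 ≤ S → ∃ b : ℝ, 0 ≤ b ∧ f b = S := by
  have hf1 : 0 < f 1 := by
    have := hf_mono (Set.mem_Ici.mpr le_rfl) (Set.mem_Ici.mpr zero_le_one) zero_lt_one
    rwa [hf0] at this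
  have hgrow : ∀ x : ℝ, 1 ≤ x → x * f 1 ≤ f x := by
    intro x hx
    have hx0 : (0:ℝ) < x := lt_of_lt_of_le zero_lt_one hx
    have ha : (0:ℝ) ≤ x⁻¹ := by positivity
    have hb : (0:ℝ) ≤ 1 - x⁻¹ := by
      have : x⁻¹ ≤ 1 := by
        rw [inv_le_one_iff₀]; right; exact hx
      linarith
    have hab : x⁻¹ + (1 - x⁻¹) = 1 := by ring
    have h := hconv.2 (Set.mem_Ici.mpr hx0.le) (Set.mem_Ici.mpr le_rfl) ha hb hab
    simp only [smul_eq_mul, mul_zero, hf0, add_zero] at h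
    rw [inv_mul_cancel₀ hx0.ne'] at h
    have := mul_le_mul_of_nonneg_left h hx0.le
    calc x * f 1 ≤ x * (x⁻¹ * f x) := this
      _ = f x := by field_simp
  intro S hS
  set M := max 1 (S / f 1) with hM_def
  have hM1 : (1:ℝ) ≤ M := le_max_left _ _
  have hM0 : (0:ℝ) ≤ M := zero_le_one.trans hM1
  have hfM : S ≤ f M := by
    have h1 := hgrow M hM1
    have h2 : S / f 1 ≤ M := le_max_right _ _
    rw [div_le_iff₀ hf1] at h2
    linarith
  have hsub : Set.Icc (0:ℝ) M ⊆ Set.Ici 0 := fun t ht => ht.1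
  obtain ⟨b, hb, hfb⟩ := intermediate_value_Icc hM0 (hf_cont.mono hsub)
    (by rw [hf0]; exact ⟨hS, hfM⟩)
  exact ⟨b, hb.1, hfb⟩

/-- Numerical radius bound: `‖T‖ ≤ 2 ω(T)` on a nontrivial complex Hilbert space. -/
lemma aux_norm_le_two_mul_sSup [Nontrivial H] (T : H →L[ℂ] H) :
    ‖T‖ ≤ 2 * sSup {r : ℝ | ∃ y : H, ‖y‖ = 1 ∧ r = ‖(inner ℂ (T y) y : ℂ)‖} := by
  obtain ⟨z0, hz0⟩ := exists_ne (0 : H)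
  have hz0' : ‖z0‖ ≠ 0 := norm_ne_zero_iff.mpr hz0
  set e : H := ((‖z0‖ : ℂ))⁻¹ • z0 with he_def
  have he : ‖e‖ = 1 := by
    rw [he_def, norm_smul, norm_inv, Complex.norm_real, Real.norm_eq_abs,
      abs_of_nonneg (norm_nonneg _), inv_mul_cancel₀ hz0']
  set S : Set ℝ := {r : ℝ | ∃ y : H, ‖y‖ = 1 ∧ r = ‖(inner ℂ (T y) y : ℂ)‖} with hS_def
  have hbdd : BddAbove S := by
    refine ⟨‖T‖, ?_⟩
    rintro r ⟨y, hy, rfl⟩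
    calc ‖(inner ℂ (T y) y : ℂ)‖ ≤ ‖T y‖ * ‖y‖ := norm_inner_le_norm _ _
      _ ≤ ‖T‖ * ‖y‖ * ‖y‖ := by gcongr; exact T.le_opNorm y
      _ = ‖T‖ := by rw [hy]; ring
  set ω := sSup S with hω_def
  have hω0 : 0 ≤ ω :=
    (norm_nonneg _).trans (le_csSup hbdd ⟨e, he, rfl⟩)
  have key : ∀ z : H, ‖(inner ℂ (T z) z : ℂ)‖ ≤ ω * (‖z‖ * ‖z‖) := by
    intro z
    by_cases hz : z = 0
    · simp [hz]
    · have hc : (0:ℝ) < ‖z‖ := norm_pos_iff.mpr hz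
      set u : H := ((‖z‖ : ℂ))⁻¹ • z with hu_def
      have hu : ‖u‖ = 1 := by
        rw [hu_def, norm_smul, norm_inv, Complex.norm_real, Real.norm_eq_abs,
          abs_of_nonneg (norm_nonneg _), inv_mul_cancel₀ hc.ne']
      have h1 : ‖(inner ℂ (T u) u : ℂ)‖ ≤ ω := le_csSup hbdd ⟨u, hu, rfl⟩
      have h2 : (inner ℂ (T u) u : ℂ) = ((‖z‖:ℂ))⁻¹ * ((‖z‖:ℂ))⁻¹ * inner ℂ (T z) z := by
        rw [hu_def, map_smul, inner_smul_left, inner_smul_right, map_inv₀,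
          Complex.conj_ofReal]
        ring
      have h3 : ‖(inner ℂ (T u) u : ℂ)‖ = ‖z‖⁻¹ * ‖z‖⁻¹ * ‖(inner ℂ (T z) z : ℂ)‖ := by
        rw [h2, norm_mul, norm_mul, norm_inv, Complex.norm_real, Real.norm_eq_abs,
          abs_of_nonneg (norm_nonneg _)]
      rw [h3] at h1
      have := mul_le_mul_of_nonneg_left h1 (by positivity : (0:ℝ) ≤ ‖z‖ * ‖z‖)
      calc ‖(inner ℂ (T z) z : ℂ)‖
          = ‖z‖ * ‖z‖ * (‖z‖⁻¹ * ‖z‖⁻¹ * ‖(inner ℂ (T z) z : ℂ)‖) := by field_simp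
        _ ≤ ‖z‖ * ‖z‖ * ω := this
        _ = ω * (‖z‖ * ‖z‖) := by ring
  have polar : ∀ x y : H, ‖x‖ = 1 → ‖y‖ = 1 → ‖(inner ℂ (T y) x : ℂ)‖ ≤ 2 * ω := by
    intro x y hx hy
    have hpol := inner_map_polarization (T : H →ₗ[ℂ] H) x y
    simp only [ContinuousLinearMap.coe_coe] at hpol
    set A : ℂ := inner ℂ (T (x + y)) (x + y) with hA_def
    set B : ℂ := inner ℂ (T (x - y)) (x - y) with hB_def
    set C : ℂ := inner ℂ (T (x + Complex.I • y)) (x + Complex.I • y) with hC_def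
    set D : ℂ := inner ℂ (T (x - Complex.I • y)) (x - Complex.I • y) with hD_def
    have hA : ‖A‖ ≤ ω * (‖x + y‖ * ‖x + y‖) := key _
    have hB : ‖B‖ ≤ ω * (‖x - y‖ * ‖x - y‖) := key _
    have hC : ‖C‖ ≤ ω * (‖x + Complex.I • y‖ * ‖x + Complex.I • y‖) := key _
    have hD : ‖D‖ ≤ ω * (‖x - Complex.I • y‖ * ‖x - Complex.I • y‖) := key _
    have hIy : ‖Complex.I • y‖ = 1 := by
      rw [norm_smul, Complex.norm_I, one_mul, hy]
    have hp1 : ‖x + y‖ * ‖x + y‖ + ‖x - y‖ * ‖x - y‖ = 4 := by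
      have := parallelogram_law_with_norm ℂ x y
      rw [hx, hy] at this; linarith
    have hp2 : ‖x + Complex.I • y‖ * ‖x + Complex.I • y‖
        + ‖x - Complex.I • y‖ * ‖x - Complex.I • y‖ = 4 := by
      have := parallelogram_law_with_norm ℂ x (Complex.I • y)
      rw [hx, hIy] at this; linarith
    have hub : ‖A - B + Complex.I * C - Complex.I * D‖ ≤ ‖A‖ + ‖B‖ + ‖C‖ + ‖D‖ := by
      have e1 : ‖Complex.I * C‖ = ‖C‖ := by rw [norm_mul, Complex.norm_I, one_mul]
      have e2 : ‖Complex.I * D‖ = ‖D‖ := by rw [norm_mul, Complex.norm_I, one_mul]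
      calc ‖A - B + Complex.I * C - Complex.I * D‖
          ≤ ‖A - B + Complex.I * C‖ + ‖Complex.I * D‖ := norm_sub_le _ _
        _ ≤ ‖A - B‖ + ‖Complex.I * C‖ + ‖Complex.I * D‖ :=
            add_le_add (norm_add_le _ _) le_rfl
        _ ≤ ‖A‖ + ‖B‖ + ‖C‖ + ‖D‖ := by
            rw [e1, e2]
            have := norm_sub_le A B
            linarith
    calc ‖(inner ℂ (T y) x : ℂ)‖
        = ‖(A - B + Complex.I * C - Complex.I * D) / 4‖ := by rw [hpol]
      _ = ‖A - B + Complex.I * C - Complex.I * D‖ / 4 := by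
          rw [norm_div]; norm_num
      _ ≤ (‖A‖ + ‖B‖ + ‖C‖ + ‖D‖) / 4 := by linarith
      _ ≤ (ω * (‖x + y‖ * ‖x + y‖) + ω * (‖x - y‖ * ‖x - y‖)
            + ω * (‖x + Complex.I • y‖ * ‖x + Complex.I • y‖)
            + ω * (‖x - Complex.I • y‖ * ‖x - Complex.I • y‖)) / 4 := by linarith
      _ = ω * ((‖x + y‖ * ‖x + y‖ + ‖x - y‖ * ‖x - y‖)
            + (‖x + Complex.I • y‖ * ‖x + Complex.I • y‖
              + ‖x - Complex.I • y‖ * ‖x - Complex.I • y‖)) / 4 := by ring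
      _ = 2 * ω := by rw [hp1, hp2]; ring
  refine T.opNorm_le_bound (by positivity) fun z => ?_
  by_cases hz : z = 0
  · simp [hz]
  · have hc : (0:ℝ) < ‖z‖ := norm_pos_iff.mpr hz
    set u : H := ((‖z‖ : ℂ))⁻¹ • z with hu_def
    have hu : ‖u‖ = 1 := by
      rw [hu_def, norm_smul, norm_inv, Complex.norm_real, Real.norm_eq_abs,
        abs_of_nonneg (norm_nonneg _), inv_mul_cancel₀ hc.ne']
    have hTu : ‖T u‖ ≤ 2 * ω := by
      by_cases hT0 : T u = 0
      · rw [hT0, norm_zero]; positivity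
      · have hd : (0:ℝ) < ‖T u‖ := norm_pos_iff.mpr hT0
        set v : H := ((‖T u‖ : ℂ))⁻¹ • (T u) with hv_def
        have hv : ‖v‖ = 1 := by
          rw [hv_def, norm_smul, norm_inv, Complex.norm_real, Real.norm_eq_abs,
            abs_of_nonneg (norm_nonneg _), inv_mul_cancel₀ hd.ne']
        have hval : (inner ℂ (T u) v : ℂ) = (‖T u‖ : ℂ) := by
          rw [hv_def, inner_smul_right, inner_self_eq_norm_sq_to_K]
          have : ((‖T u‖ : ℂ)) ≠ 0 := by
            simpa using hd.ne'
          field_simp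
          simp
        have := polar v u hv hu
        rw [hval] at this
        rwa [Complex.norm_real, Real.norm_eq_abs, abs_of_nonneg (norm_nonneg _)] at this
    have hTz : T u = ((‖z‖ : ℂ))⁻¹ • T z := by rw [hu_def, map_smul]
    have : ‖T u‖ = ‖z‖⁻¹ * ‖T z‖ := by
      rw [hTz, norm_smul, norm_inv, Complex.norm_real, Real.norm_eq_abs,
        abs_of_nonneg (norm_nonneg _)]
    rw [this] at hTu
    calc ‖T z‖ = ‖z‖ * (‖z‖⁻¹ * ‖T z‖) := by field_simp
      _ ≤ ‖z‖ * (2 * ω) := by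
          exact mul_le_mul_of_nonneg_left hTu hc.le
      _ = 2 * ω * ‖z‖ := by ring

end Aux

/-- Lower bounds for the `f`-operator radius:
`ω_f (T₁, …, Tₙ) ≥ (1/n) max ω(Tⱼ) ≥ (1/(2n)) max ‖Tⱼ‖`. -/
theorem omega_f_ge_max_numericalRadius
    {H : Type*} [NormedAddCommGroup H] [InnerProductSpace ℂ H] [CompleteSpace H]
    [Nontrivial H]
    (n : ℕ) (hn : 0 < n) (T : Fin n → H →L[ℂ] H)
    (f finv : ℝ → ℝ)
    (hf_cont : ContinuousOn f (Set.Ici 0))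
    (hf_mono : StrictMonoOn f (Set.Ici 0))
    (hconv : ConvexOn ℝ (Set.Ici 0) f)
    (hnn : ∀ t ∈ Set.Ici (0 : ℝ), 0 ≤ f t)
    (hf0 : f 0 = 0)
    (hinv : ∀ t ∈ Set.Ici (0 : ℝ), finv (f t) = t)
    (hinv' : ∀ s ∈ Set.Ici (0 : ℝ), f (finv s) = s) :
    (1 / (n : ℝ)) * (⨆ j, sSup {r : ℝ | ∃ y : H, ‖y‖ = 1 ∧ r = ‖(inner ℂ (T j y) y : ℂ)‖})
      ≤ sSup {r : ℝ | ∃ y : H, ‖y‖ = 1 ∧ r = finv (∑ j, f ‖(inner ℂ (T j y) y : ℂ)‖)} ∧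
    (1 / (2 * (n : ℝ))) * (⨆ j, ‖T j‖) ≤
      (1 / (n : ℝ)) * (⨆ j, sSup {r : ℝ | ∃ y : H, ‖y‖ = 1 ∧ r = ‖(inner ℂ (T j y) y : ℂ)‖}) := by
  haveI : Nonempty (Fin n) := Fin.pos_iff_nonempty.mp hn
  have hsurj := aux_exists_f_eq f hf_cont hf_mono hconv hf0
  have hn' : (0:ℝ) < n := by exact_mod_cast hn
  -- a unit vector
  obtain ⟨z0, hz0⟩ := exists_ne (0 : H)
  have hz0' : ‖z0‖ ≠ 0 := norm_ne_zero_iff.mpr hz0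
  set e : H := ((‖z0‖ : ℂ))⁻¹ • z0 with he_def
  have he : ‖e‖ = 1 := by
    rw [he_def, norm_smul, norm_inv, Complex.norm_real, Real.norm_eq_abs,
      abs_of_nonneg (norm_nonneg _), inv_mul_cancel₀ hz0']
  -- basic facts about the numerical radius sets
  have hbddω : ∀ j : Fin n,
      BddAbove {r : ℝ | ∃ y : H, ‖y‖ = 1 ∧ r = ‖(inner ℂ (T j y) y : ℂ)‖} := by
    intro j
    refine ⟨‖T j‖, ?_⟩
    rintro r ⟨y, hy, rfl⟩
    calc ‖(inner ℂ (T j y) y : ℂ)‖ ≤ ‖T j y‖ * ‖y‖ := norm_inner_le_norm _ _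
      _ ≤ ‖T j‖ * ‖y‖ * ‖y‖ := by gcongr; exact (T j).le_opNorm y
      _ = ‖T j‖ := by rw [hy]; ring
  have hω0 : ∀ j : Fin n,
      0 ≤ sSup {r : ℝ | ∃ y : H, ‖y‖ = 1 ∧ r = ‖(inner ℂ (T j y) y : ℂ)‖} :=
    fun j => (norm_nonneg _).trans (le_csSup (hbddω j) ⟨e, he, rfl⟩)
  -- comparison helper for f
  have hle : ∀ a b : ℝ, 0 ≤ a → 0 ≤ b → f a ≤ f b → a ≤ b := by
    intro a b ha hb h
    by_contra hab
    push_neg at hab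
    exact absurd h (not_le.mpr (hf_mono (Set.mem_Ici.mpr hb) (Set.mem_Ici.mpr ha) hab))
  -- the ω_f set is bounded above
  have hsumnn : ∀ y : H, 0 ≤ ∑ j, f ‖(inner ℂ (T j y) y : ℂ)‖ :=
    fun y => Finset.sum_nonneg fun j _ => hnn _ (norm_nonneg _)
  obtain ⟨Bd, hBd0, hfBd⟩ := hsurj (∑ j, f ‖T j‖)
    (Finset.sum_nonneg fun j _ => hnn _ (norm_nonneg _))
  have hboundj : ∀ (j : Fin n) (y : H), ‖y‖ = 1 → ‖(inner ℂ (T j y) y : ℂ)‖ ≤ ‖T j‖ := by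
    intro j y hy
    calc ‖(inner ℂ (T j y) y : ℂ)‖ ≤ ‖T j y‖ * ‖y‖ := norm_inner_le_norm _ _
      _ ≤ ‖T j‖ * ‖y‖ * ‖y‖ := by gcongr; exact (T j).le_opNorm y
      _ = ‖T j‖ := by rw [hy]; ring
  have hbddf : BddAbove
      {r : ℝ | ∃ y : H, ‖y‖ = 1 ∧ r = finv (∑ j, f ‖(inner ℂ (T j y) y : ℂ)‖)} := by
    refine ⟨Bd, ?_⟩
    rintro r ⟨y, hy, rfl⟩
    obtain ⟨b, hb0, hfb⟩ := hsurj _ (hsumnn y)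
    have hwb : finv (∑ j, f ‖(inner ℂ (T j y) y : ℂ)‖) = b := by
      rw [← hfb]; exact hinv b (Set.mem_Ici.mpr hb0)
    rw [hwb]
    refine hle b Bd hb0 hBd0 ?_
    rw [hfb, hfBd]
    exact Finset.sum_le_sum fun j _ =>
      hf_mono.monotoneOn (Set.mem_Ici.mpr (norm_nonneg _))
        (Set.mem_Ici.mpr (norm_nonneg _)) (hboundj j y hy)
  -- each numerical radius is ≤ ω_f
  have hstep : ∀ j : Fin n,
      sSup {r : ℝ | ∃ y : H, ‖y‖ = 1 ∧ r = ‖(inner ℂ (T j y) y : ℂ)‖}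
        ≤ sSup {r : ℝ | ∃ y : H, ‖y‖ = 1 ∧ r = finv (∑ j, f ‖(inner ℂ (T j y) y : ℂ)‖)} := by
    intro j
    refine csSup_le ⟨_, e, he, rfl⟩ ?_
    rintro r ⟨y, hy, rfl⟩
    obtain ⟨b, hb0, hfb⟩ := hsurj _ (hsumnn y)
    have hwb : finv (∑ j, f ‖(inner ℂ (T j y) y : ℂ)‖) = b := by
      rw [← hfb]; exact hinv b (Set.mem_Ici.mpr hb0)
    have hjb : ‖(inner ℂ (T j y) y : ℂ)‖ ≤ b := by
      refine hle _ _ (norm_nonneg _) hb0 ?_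
      rw [hfb]
      exact Finset.single_le_sum
        (fun i _ => hnn _ (Set.mem_Ici.mpr (norm_nonneg ((inner ℂ (T i y) y : ℂ)))))
        (Finset.mem_univ j)
    calc ‖(inner ℂ (T j y) y : ℂ)‖ ≤ b := hjb
      _ = finv (∑ j, f ‖(inner ℂ (T j y) y : ℂ)‖) := hwb.symm
      _ ≤ _ := le_csSup hbddf ⟨y, hy, rfl⟩
  have hbddrange : BddAbove (Set.range fun j : Fin n =>
      sSup {r : ℝ | ∃ y : H, ‖y‖ = 1 ∧ r = ‖(inner ℂ (T j y) y : ℂ)‖}) :=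
    (Set.finite_range _).bddAbove
  have h1 : (⨆ j, sSup {r : ℝ | ∃ y : H, ‖y‖ = 1 ∧ r = ‖(inner ℂ (T j y) y : ℂ)‖})
      ≤ sSup {r : ℝ | ∃ y : H, ‖y‖ = 1 ∧ r = finv (∑ j, f ‖(inner ℂ (T j y) y : ℂ)‖)} :=
    ciSup_le hstep
  have h2 : 0 ≤ ⨆ j, sSup {r : ℝ | ∃ y : H, ‖y‖ = 1 ∧ r = ‖(inner ℂ (T j y) y : ℂ)‖} :=
    (hω0 (Classical.arbitrary _)).trans (le_ciSup hbddrange _)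
  constructor
  · calc (1 / (n : ℝ)) * (⨆ j, sSup {r : ℝ | ∃ y : H, ‖y‖ = 1 ∧ r = ‖(inner ℂ (T j y) y : ℂ)‖})
        ≤ 1 * (⨆ j, sSup {r : ℝ | ∃ y : H, ‖y‖ = 1 ∧ r = ‖(inner ℂ (T j y) y : ℂ)‖}) := by
          refine mul_le_mul_of_nonneg_right ?_ h2
          rw [div_le_one hn']
          exact_mod_cast hn
      _ = _ := one_mul _
      _ ≤ _ := h1
  · have hT2 : ∀ j : Fin n, ‖T j‖ ≤
        2 * (⨆ j, sSup {r : ℝ | ∃ y : H, ‖y‖ = 1 ∧ r = ‖(inner ℂ (T j y) y : ℂ)‖}) := by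
      intro j
      refine (aux_norm_le_two_mul_sSup (T j)).trans ?_
      exact mul_le_mul_of_nonneg_left (le_ciSup hbddrange j) (by norm_num)
    have hsup : (⨆ j, ‖T j‖) ≤
        2 * (⨆ j, sSup {r : ℝ | ∃ y : H, ‖y‖ = 1 ∧ r = ‖(inner ℂ (T j y) y : ℂ)‖}) :=
      ciSup_le hT2
    calc (1 / (2 * (n : ℝ))) * (⨆ j, ‖T j‖)
        ≤ (1 / (2 * (n : ℝ))) *
          (2 * (⨆ j, sSup {r : ℝ | ∃ y : H, ‖y‖ = 1 ∧ r = ‖(inner ℂ (T j y) y : ℂ)‖})) :=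
          mul_le_mul_of_nonneg_left hsup (by positivity)
      _ = (1 / (n : ℝ)) *
          (⨆ j, sSup {r : ℝ | ∃ y : H, ‖y‖ = 1 ∧ r = ‖(inner ℂ (T j y) y : ℂ)‖}) := by
          field_simp
end

section
/- Let T ∈ B(H) have Cartesian decomposition T = B + iC with B, C self-adjoint, and let f : [0,∞) → [0,∞) be a continuous strictly increasing convex function. Then for every unit vector x, f⁻¹(∑ over the two operators B, iC of f applied to |⟨Bx,x⟩| and |⟨Cx,x⟩|) ≥ (1/2)|⟨Tx,x⟩|; consequently ω_f(B, C) ≥ (1/2) ω(T). -/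
lemma aux_key_omega_f (f finv : ℝ → ℝ)
    (hf_cont : ContinuousOn f (Set.Ici 0))
    (hf_mono : StrictMonoOn f (Set.Ici 0))
    (hconv : ConvexOn ℝ (Set.Ici 0) f)
    (hnn : ∀ t ∈ Set.Ici (0 : ℝ), 0 ≤ f t)
    (hf0 : f 0 = 0)
    (hinv : ∀ t ∈ Set.Ici (0 : ℝ), finv (f t) = t)
    (b c : ℝ) (hb : 0 ≤ b) (hc : 0 ≤ c) :
    (b + c) / 2 ≤ finv (f b + f c) ∧ finv (f b + f c) ≤ b + c := by
  have hbc : (0:ℝ) ≤ b + c := by linarith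
  have hsup : f b + f c ≤ f (b + c) := by
    rcases eq_or_lt_of_le hbc with h | h
    · have hb0 : b = 0 := by linarith
      have hc0 : c = 0 := by linarith
      simp [hb0, hc0, hf0]
    · have h1 : f b ≤ (b / (b+c)) * f (b + c) := by
        have := hconv.2 (Set.mem_Ici.2 hbc) (Set.self_mem_Ici (a := (0:ℝ)))
          (show (0:ℝ) ≤ b/(b+c) by positivity) (show (0:ℝ) ≤ c/(b+c) by positivity)
          (show b/(b+c) + c/(b+c) = 1 by field_simp)
        simp only [smul_eq_mul, mul_zero, add_zero, hf0] at this
        rwa [div_mul_cancel₀ b (ne_of_gt h)] at this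
      have h2 : f c ≤ (c / (b+c)) * f (b + c) := by
        have := hconv.2 (Set.mem_Ici.2 hbc) (Set.self_mem_Ici (a := (0:ℝ)))
          (show (0:ℝ) ≤ c/(b+c) by positivity) (show (0:ℝ) ≤ b/(b+c) by positivity)
          (show c/(b+c) + b/(b+c) = 1 by field_simp; ring)
        simp only [smul_eq_mul, mul_zero, add_zero, hf0] at this
        rwa [div_mul_cancel₀ c (ne_of_gt h)] at this
      have he : (b/(b+c)) * f (b+c) + (c/(b+c)) * f (b+c) = f (b+c) := by
        field_simp
      linarith
  have hs0 : 0 ≤ f b + f c := add_nonneg (hnn b hb) (hnn c hc)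
  have hIVT := intermediate_value_Icc hbc (hf_cont.mono Set.Icc_subset_Ici_self)
  have hmem : f b + f c ∈ Set.Icc (f 0) (f (b+c)) := by
    rw [hf0]; exact ⟨hs0, hsup⟩
  obtain ⟨t, ht, hft⟩ := hIVT hmem
  have hfinv : finv (f b + f c) = t := by
    rw [← hft]; exact hinv t ht.1
  refine ⟨?_, by rw [hfinv]; exact ht.2⟩
  rw [hfinv]
  have hmid : f ((b+c)/2) ≤ (f b + f c)/2 := by
    have := hconv.2 (Set.mem_Ici.2 hb) (Set.mem_Ici.2 hc)
      (by norm_num : (0:ℝ) ≤ 1/2) (by norm_num : (0:ℝ) ≤ 1/2) (by norm_num)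
    have e : (1/2:ℝ) • b + (1/2:ℝ) • c = (b+c)/2 := by
      simp only [smul_eq_mul]; ring
    rw [e] at this
    simp only [smul_eq_mul] at this
    linarith
  have hle : f ((b+c)/2) ≤ f t := by rw [hft]; linarith
  exact (hf_mono.le_iff_le (Set.mem_Ici.2 (by linarith)) ht.1).1 hle

lemma aux_tri_omega_f {H : Type*} [NormedAddCommGroup H] [InnerProductSpace ℂ H]
    [CompleteSpace H] (T B C : H →L[ℂ] H)
    (hB : B = (2⁻¹ : ℂ) • (T + ContinuousLinearMap.adjoint T))
    (hC : C = ((2 * Complex.I)⁻¹ : ℂ) • (T - ContinuousLinearMap.adjoint T))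
    (x : H) :
    ‖(inner ℂ (T x) x : ℂ)‖ ≤ ‖(inner ℂ (B x) x : ℂ)‖ + ‖(inner ℂ (C x) x : ℂ)‖ := by
  set τ : ℂ := inner ℂ (T x) x with hτ
  have hadj : (inner ℂ (ContinuousLinearMap.adjoint T x) x : ℂ) = starRingEnd ℂ τ := by
    rw [ContinuousLinearMap.adjoint_inner_left, ← inner_conj_symm]
  have hb : (inner ℂ (B x) x : ℂ) = 2⁻¹ * (τ + starRingEnd ℂ τ) := by
    rw [hB]
    simp only [ContinuousLinearMap.smul_apply, ContinuousLinearMap.add_apply,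
      inner_smul_left, inner_add_left, hadj, ← hτ]
    simp [Complex.conj_inv, Complex.conj_ofNat]
  have hc : (inner ℂ (C x) x : ℂ) = (starRingEnd ℂ (2 * Complex.I))⁻¹ * (τ - starRingEnd ℂ τ) := by
    rw [hC]
    simp only [ContinuousLinearMap.smul_apply, ContinuousLinearMap.sub_apply,
      inner_smul_left, inner_sub_left, hadj, ← hτ, map_inv₀]
  have key : starRingEnd ℂ τ = (inner ℂ (B x) x : ℂ) + Complex.I * (inner ℂ (C x) x : ℂ) := by
    rw [hb, hc]
    simp only [map_mul, Complex.conj_I, Complex.conj_ofNat]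
    field_simp
    ring_nf
  calc ‖τ‖ = ‖starRingEnd ℂ τ‖ := (RCLike.norm_conj τ).symm
    _ ≤ ‖(inner ℂ (B x) x : ℂ)‖ + ‖Complex.I * (inner ℂ (C x) x : ℂ)‖ := by
        rw [key]; exact norm_add_le _ _
    _ = ‖(inner ℂ (B x) x : ℂ)‖ + ‖(inner ℂ (C x) x : ℂ)‖ := by
        rw [norm_mul, Complex.norm_I, one_mul]

/-- If `T = B + iC` is the Cartesian decomposition of `T`, then for every unit vector
`x`, `(1/2) |⟨T x, x⟩| ≤ finv (f |⟨B x, x⟩| + f |⟨C x, x⟩|)`; consequently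
`ω_f (B, C) ≥ (1/2) ω (T)`. -/
theorem omega_f_cartesian_ge_half_numericalRadius
    {H : Type*} [NormedAddCommGroup H] [InnerProductSpace ℂ H] [CompleteSpace H]
    (T B C : H →L[ℂ] H)
    (hB : B = (2⁻¹ : ℂ) • (T + ContinuousLinearMap.adjoint T))
    (hC : C = ((2 * Complex.I)⁻¹ : ℂ) • (T - ContinuousLinearMap.adjoint T))
    (f finv : ℝ → ℝ)
    (hf_cont : ContinuousOn f (Set.Ici 0))
    (hf_mono : StrictMonoOn f (Set.Ici 0))
    (hconv : ConvexOn ℝ (Set.Ici 0) f)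
    (hnn : ∀ t ∈ Set.Ici (0 : ℝ), 0 ≤ f t)
    (hf0 : f 0 = 0)
    (hinv : ∀ t ∈ Set.Ici (0 : ℝ), finv (f t) = t)
    (hinv' : ∀ s ∈ Set.Ici (0 : ℝ), f (finv s) = s) :
    (∀ x : H, ‖x‖ = 1 →
      2⁻¹ * ‖(inner ℂ (T x) x : ℂ)‖ ≤
        finv (f ‖(inner ℂ (B x) x : ℂ)‖ + f ‖(inner ℂ (C x) x : ℂ)‖)) ∧
    2⁻¹ * sSup {r : ℝ | ∃ y : H, ‖y‖ = 1 ∧ r = ‖(inner ℂ (T y) y : ℂ)‖} ≤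
      sSup {r : ℝ | ∃ y : H, ‖y‖ = 1 ∧
        r = finv (f ‖(inner ℂ (B y) y : ℂ)‖ + f ‖(inner ℂ (C y) y : ℂ)‖)} := by
  have key := fun x : H => aux_key_omega_f f finv hf_cont hf_mono hconv hnn hf0 hinv
    ‖(inner ℂ (B x) x : ℂ)‖ ‖(inner ℂ (C x) x : ℂ)‖ (norm_nonneg _) (norm_nonneg _)
  have tri := aux_tri_omega_f T B C hB hC
  have part1 : ∀ x : H, ‖x‖ = 1 →
      2⁻¹ * ‖(inner ℂ (T x) x : ℂ)‖ ≤
        finv (f ‖(inner ℂ (B x) x : ℂ)‖ + f ‖(inner ℂ (C x) x : ℂ)‖) := by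
    intro x _
    have h1 := (key x).1
    have h2 := tri x
    linarith
  refine ⟨part1, ?_⟩
  set S1 := {r : ℝ | ∃ y : H, ‖y‖ = 1 ∧ r = ‖(inner ℂ (T y) y : ℂ)‖} with hS1
  set S2 := {r : ℝ | ∃ y : H, ‖y‖ = 1 ∧
    r = finv (f ‖(inner ℂ (B y) y : ℂ)‖ + f ‖(inner ℂ (C y) y : ℂ)‖)} with hS2
  by_cases he : ∃ y : H, ‖y‖ = 1
  · obtain ⟨y0, hy0⟩ := he
    have hbound : ∀ y : H, ‖y‖ = 1 →
        finv (f ‖(inner ℂ (B y) y : ℂ)‖ + f ‖(inner ℂ (C y) y : ℂ)‖) ≤ ‖B‖ + ‖C‖ := by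
      intro y hy
      have hBb : ‖(inner ℂ (B y) y : ℂ)‖ ≤ ‖B‖ := by
        calc ‖(inner ℂ (B y) y : ℂ)‖ ≤ ‖B y‖ * ‖y‖ := norm_inner_le_norm _ _
          _ ≤ ‖B‖ * ‖y‖ * ‖y‖ := by
              gcongr; exact B.le_opNorm y
          _ = ‖B‖ := by rw [hy]; ring
      have hCc : ‖(inner ℂ (C y) y : ℂ)‖ ≤ ‖C‖ := by
        calc ‖(inner ℂ (C y) y : ℂ)‖ ≤ ‖C y‖ * ‖y‖ := norm_inner_le_norm _ _
          _ ≤ ‖C‖ * ‖y‖ * ‖y‖ := by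
              gcongr; exact C.le_opNorm y
          _ = ‖C‖ := by rw [hy]; ring
      have := (key y).2
      linarith
    have hbdd : BddAbove S2 := by
      refine ⟨‖B‖ + ‖C‖, ?_⟩
      rintro r ⟨y, hy, rfl⟩
      exact hbound y hy
    have hne1 : S1.Nonempty := ⟨_, y0, hy0, rfl⟩
    have h2 : sSup S1 ≤ 2 * sSup S2 := by
      apply csSup_le hne1
      rintro r ⟨y, hy, rfl⟩
      have hp := part1 y hy
      have hmem : finv (f ‖(inner ℂ (B y) y : ℂ)‖ + f ‖(inner ℂ (C y) y : ℂ)‖) ∈ S2 :=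
        ⟨y, hy, rfl⟩
      have := le_csSup hbdd hmem
      linarith
    linarith
  · have h1 : S1 = ∅ := by
      rw [Set.eq_empty_iff_forall_notMem]
      rintro r ⟨y, hy, -⟩
      exact he ⟨y, hy⟩
    have h2 : S2 = ∅ := by
      rw [Set.eq_empty_iff_forall_notMem]
      rintro r ⟨y, hy, -⟩
      exact he ⟨y, hy⟩
    rw [h1, h2, Real.sSup_empty]
    norm_num
end

section
/- Let T₁, …, Tₙ ∈ B(H), let f : [0,∞) → [0,∞) be a strictly increasing convex function, and let 0 ≤ α ≤ 1. Then for every unit vector x ∈ H, ∑ⱼ f(|⟨Tⱼx, x⟩|) ≤ ⟨(∑ⱼ (f(|Tⱼ|^{2α}) + f(|Tⱼ*|^{2(1−α)}))/2) x, x⟩, where |T| = (T*T)^{1/2} and powers are taken via continuous functional calculus. -/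
noncomputable section
open ContinuousLinearMap
open scoped NNReal

variable {H : Type*} [NormedAddCommGroup H] [InnerProductSpace ℂ H] [CompleteSpace H]

lemma myInner_mono {S S' : H →L[ℂ] H} (h : S ≤ S') (x : H) :
    (inner ℂ (S x) x : ℂ).re ≤ (inner ℂ (S' x) x : ℂ).re := by
  have h0 : 0 ≤ S' - S := sub_nonneg.mpr h
  have h1 := ((ContinuousLinearMap.nonneg_iff_isPositive _).mp h0).inner_nonneg_left x
  simp only [RCLike.re_to_complex, ContinuousLinearMap.sub_apply, inner_sub_left,
    Complex.sub_re, Complex.le_def, Complex.zero_re] at h1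
  linarith [h1.1]

lemma myInner_nonneg {S : H →L[ℂ] H} (h : 0 ≤ S) (x : H) :
    0 ≤ (inner ℂ (S x) x : ℂ).re := by
  simpa using myInner_mono h x

lemma myAeval_intertwine (S A B : H →L[ℂ] H) (h : S * A = B * S) (q : Polynomial ℝ) :
    S * Polynomial.aeval A q = Polynomial.aeval B q * S := by
  have hpow : ∀ k : ℕ, S * A ^ k = B ^ k * S := by
    intro k; induction k with
    | zero => simp
    | succ k ih =>
      rw [pow_succ, ← mul_assoc, ih, mul_assoc, h, ← mul_assoc, ← pow_succ]
  induction q using Polynomial.induction_on' with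
  | add p q hp hq => simp [mul_add, add_mul, hp, hq]
  | monomial n c =>
    simp only [Polynomial.aeval_monomial]
    rw [← mul_assoc, ← Algebra.commutes, mul_assoc, hpow, ← mul_assoc]
set_option maxHeartbeats 1000000 in
lemma myCfc_intertwine (S : H →L[ℂ] H) (g : ℝ → ℝ) (hg : Continuous g) :
    S * cfc g (adjoint S * S) = cfc g (S * adjoint S) * S := by
  rcases subsingleton_or_nontrivial H with hH | hH
  · have : ∀ u v : H →L[ℂ] H, u = v := fun u v =>
      ContinuousLinearMap.ext fun x => Subsingleton.elim _ _
    exact this _ _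
  set A := adjoint S * S with hAdef
  set B := S * adjoint S with hBdef
  have hA : IsSelfAdjoint A := by
    have : (0 : H →L[ℂ] H) ≤ A := by
      rw [hAdef, ← star_eq_adjoint]; exact star_mul_self_nonneg S
    exact this.isSelfAdjoint
  have hB : IsSelfAdjoint B := by
    have : (0 : H →L[ℂ] H) ≤ B := by
      rw [hBdef, ← star_eq_adjoint]; exact mul_star_self_nonneg S
    exact this.isSelfAdjoint
  set R := max ‖A‖ ‖B‖ with hR
  have hspecA : spectrum ℝ A ⊆ Set.Icc (-R) R := by
    intro t ht
    have := spectrum.norm_le_norm_of_mem ht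
    rw [Real.norm_eq_abs] at this
    have h2 : |t| ≤ R := this.trans (le_max_left _ _)
    exact ⟨neg_le_of_abs_le h2, le_of_abs_le h2⟩
  have hspecB : spectrum ℝ B ⊆ Set.Icc (-R) R := by
    intro t ht
    have := spectrum.norm_le_norm_of_mem ht
    rw [Real.norm_eq_abs] at this
    have h2 : |t| ≤ R := this.trans (le_max_right _ _)
    exact ⟨neg_le_of_abs_le h2, le_of_abs_le h2⟩
  have hSA : S * A = B * S := by rw [hAdef, hBdef, mul_assoc]
  have key : ∀ δ > (0:ℝ), ‖S * cfc g A - cfc g B * S‖ ≤ ‖S‖ * δ + δ * ‖S‖ := by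
    intro δ hδ
    obtain ⟨q, hq⟩ := exists_polynomial_near_of_continuousOn (-R) R g hg.continuousOn δ hδ
    have keyc : S * cfc (fun t => q.eval t) A = cfc (fun t => q.eval t) B * S := by
      rw [cfc_polynomial q A, cfc_polynomial q B]
      exact myAeval_intertwine S A B hSA q
    have e1 : ‖cfc g A - cfc (fun t => q.eval t) A‖ ≤ δ := by
      rw [← cfc_sub g (fun t => q.eval t) A (hg.continuousOn)
        (Polynomial.continuous q).continuousOn]
      refine norm_cfc_le hδ.le fun t ht => ?_
      rw [Real.norm_eq_abs, abs_sub_comm]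
      exact (hq t (hspecA ht)).le
    have e2 : ‖cfc (fun t => q.eval t) B - cfc g B‖ ≤ δ := by
      rw [← cfc_sub (fun t => q.eval t) g B (Polynomial.continuous q).continuousOn
        hg.continuousOn]
      refine norm_cfc_le hδ.le fun t ht => ?_
      rw [Real.norm_eq_abs]
      exact (hq t (hspecB ht)).le
    calc ‖S * cfc g A - cfc g B * S‖
        = ‖S * (cfc g A - cfc (fun t => q.eval t) A)
            + (cfc (fun t => q.eval t) B - cfc g B) * S‖ := by
          rw [mul_sub, sub_mul, keyc]; abel_nf
      _ ≤ ‖S * (cfc g A - cfc (fun t => q.eval t) A)‖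
            + ‖(cfc (fun t => q.eval t) B - cfc g B) * S‖ := norm_add_le _ _
      _ ≤ ‖S‖ * δ + δ * ‖S‖ := by
          have g1 := (norm_mul_le S (cfc g A - cfc (fun t => q.eval t) A)).trans
            (by gcongr : ‖S‖ * ‖cfc g A - cfc (fun t => q.eval t) A‖ ≤ ‖S‖ * δ)
          have g2 := (norm_mul_le (cfc (fun t => q.eval t) B - cfc g B) S).trans
            (by gcongr : ‖cfc (fun t => q.eval t) B - cfc g B‖ * ‖S‖ ≤ δ * ‖S‖)
          exact add_le_add g1 g2
  have hzero : ‖S * cfc g A - cfc g B * S‖ ≤ 0 := by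
    refine le_of_forall_pos_le_add fun ε hε => ?_
    have hδ : (0:ℝ) < ε / (2 * ‖S‖ + 1) := by positivity
    refine (key _ hδ).trans ?_
    have hS : (0:ℝ) ≤ ‖S‖ := norm_nonneg S
    rw [zero_add]
    have hd : (ε / (2 * ‖S‖ + 1)) * (2 * ‖S‖ + 1) = ε :=
      div_mul_cancel₀ _ (by positivity)
    nlinarith [hδ.le, hS]
  have h0 : S * cfc g A - cfc g B * S = 0 := norm_le_zero_iff.mp hzero
  exact sub_eq_zero.mp h0
def myPhi (β ε : ℝ) : ℝ → ℝ := fun t => (max t 0 + ε) ^ β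

lemma myPhi_continuous (β : ℝ) {ε : ℝ} (hε : 0 < ε) : Continuous (myPhi β ε) := by
  rw [continuous_iff_continuousAt]
  intro t
  have h1 : ContinuousAt (fun s : ℝ => s ^ β) (max t 0 + ε) :=
    Real.continuousAt_rpow_const _ _ (Or.inl (by positivity))
  have h2 : Continuous (fun s : ℝ => max s 0 + ε) :=
    (continuous_id.max continuous_const).add continuous_const
  exact ContinuousAt.comp (f := fun s : ℝ => max s 0 + ε) h1 h2.continuousAt

lemma myPhi_mul (β β' ε : ℝ) (hε : 0 < ε) (t : ℝ) :
    myPhi β ε t * myPhi β' ε t = myPhi (β + β') ε t :=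
  (Real.rpow_add (by positivity) β β').symm

lemma myPhi_nonneg (β : ℝ) {ε : ℝ} (hε : 0 ≤ ε) (t : ℝ) : 0 ≤ myPhi β ε t :=
  Real.rpow_nonneg (add_nonneg (le_max_right t 0) hε) β
lemma myCfc_phi_mul (C : H →L[ℂ] H) (hC : IsSelfAdjoint C) (β β' : ℝ) {ε : ℝ} (hε : 0 < ε) :
    cfc (myPhi β ε) C * cfc (myPhi β' ε) C = cfc (myPhi (β + β') ε) C := by
  rw [← cfc_mul _ _ C ((myPhi_continuous β hε).continuousOn)
    ((myPhi_continuous β' hε).continuousOn)]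
  exact cfc_congr fun t _ => myPhi_mul β β' ε hε t

lemma myCfc_phi_zero (C : H →L[ℂ] H) (hC : IsSelfAdjoint C) {ε : ℝ} (hε : 0 < ε) :
    cfc (myPhi 0 ε) C = 1 := by
  have h : cfc (myPhi 0 ε) C = cfc (fun _ : ℝ => (1:ℝ)) C :=
    cfc_congr fun t _ => Real.rpow_zero _
  rw [h, cfc_const 1 C, map_one]

set_option maxHeartbeats 2000000 in
lemma myStep (T : H →L[ℂ] H) {α ε : ℝ} (hα0 : 0 ≤ α) (hα1 : α ≤ 1) (hε : 0 < ε) (x : H) :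
    ‖(inner ℂ (T x) x : ℂ)‖ ≤
      ((inner ℂ (cfc (myPhi α ε) (adjoint T * T) x) x : ℂ).re
        + (inner ℂ (cfc (myPhi (1 - α) ε) (T * adjoint T) x) x : ℂ).re) / 2 := by
  set A := adjoint T * T with hAdef
  set B := T * adjoint T with hBdef
  have hA0 : (0 : H →L[ℂ] H) ≤ A := by
    rw [hAdef, ← star_eq_adjoint]; exact star_mul_self_nonneg T
  have hB0 : (0 : H →L[ℂ] H) ≤ B := by
    rw [hBdef, ← star_eq_adjoint]; exact mul_star_self_nonneg T
  have hA : IsSelfAdjoint A := hA0.isSelfAdjoint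
  have hB : IsSelfAdjoint B := hB0.isSelfAdjoint
  set Na := cfc (myPhi (-(α/2)) ε) A with hNa
  set Pa := cfc (myPhi (α/2) ε) A with hPa
  set Nb := cfc (myPhi (-((1-α)/2)) ε) B with hNb
  set Pb := cfc (myPhi ((1-α)/2) ε) B with hPb
  set D := Nb * T * Na with hD
  -- factorization
  have h1 : Pb * Nb = 1 := by
    rw [hPb, hNb, myCfc_phi_mul B hB _ _ hε, add_neg_cancel, myCfc_phi_zero B hB hε]
  have h2 : Na * Pa = 1 := by
    rw [hPa, hNa, myCfc_phi_mul A hA _ _ hε, neg_add_cancel, myCfc_phi_zero A hA hε]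
  have hfact : Pb * (D * Pa) = T := by
    have e : Pb * (D * Pa) = (Pb * Nb) * T * (Na * Pa) := by
      rw [hD]; simp only [mul_assoc]
    rw [e, h1, h2, one_mul, mul_one]
  -- selfadjointness of the cfc pieces
  have hNasa : IsSelfAdjoint Na := cfc_predicate _ _
  have hNbsa : IsSelfAdjoint Nb := cfc_predicate _ _
  have hPasa : IsSelfAdjoint Pa := cfc_predicate _ _
  have hPbsa : IsSelfAdjoint Pb := cfc_predicate _ _
  -- norm of D
  have hadj : star D = Na * adjoint T * Nb := by
    rw [hD, star_mul, star_mul, hNasa.star_eq, hNbsa.star_eq, star_eq_adjoint, mul_assoc]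
  have hmid : adjoint T * (Nb * Nb) = cfc (myPhi (-(1-α)) ε) A * adjoint T := by
    rw [hNb, myCfc_phi_mul B hB _ _ hε]
    have h3 : -((1-α)/2) + -((1-α)/2) = -(1-α) := by ring
    rw [h3]
    have h4 := myCfc_intertwine (adjoint T) (myPhi (-(1-α)) ε) (myPhi_continuous _ hε)
    rw [adjoint_adjoint] at h4
    rw [← hAdef, ← hBdef] at h4
    exact h4
  have hDD : star D * D
      = cfc (fun t => myPhi (-(α/2)) ε t * (myPhi (-(1-α)) ε t * t * myPhi (-(α/2)) ε t)) A := by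
    have e3 : cfc (fun t => myPhi (-(1-α)) ε t * t) A = cfc (myPhi (-(1-α)) ε) A * A := by
      rw [cfc_mul (myPhi (-(1-α)) ε) (fun t : ℝ => t) A ((myPhi_continuous _ hε).continuousOn)
        (continuous_id.continuousOn), cfc_id' ℝ A]
    have hmid2 : adjoint T * (Nb * Nb) * T = cfc (fun t => myPhi (-(1-α)) ε t * t) A := by
      rw [hmid, mul_assoc, ← hAdef, e3]
    have e1 : star D * D = Na * (adjoint T * (Nb * Nb) * T) * Na := by
      rw [hadj, hD]; simp only [mul_assoc]
    rw [e1, hmid2]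
    have e4 : cfc (fun t => myPhi (-(α/2)) ε t * (myPhi (-(1-α)) ε t * t * myPhi (-(α/2)) ε t)) A
        = cfc (myPhi (-(α/2)) ε) A
          * cfc (fun t => myPhi (-(1-α)) ε t * t * myPhi (-(α/2)) ε t) A :=
      cfc_mul _ _ A ((myPhi_continuous _ hε).continuousOn)
        ((((myPhi_continuous _ hε).mul continuous_id).mul
          (myPhi_continuous _ hε)).continuousOn)
    have e5 : cfc (fun t => myPhi (-(1-α)) ε t * t * myPhi (-(α/2)) ε t) A
        = cfc (fun t => myPhi (-(1-α)) ε t * t) A * cfc (myPhi (-(α/2)) ε) A :=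
      cfc_mul _ _ A (((myPhi_continuous _ hε).mul continuous_id).continuousOn)
        ((myPhi_continuous _ hε).continuousOn)
    rw [e4, e5, hNa]
    simp only [mul_assoc]
  have hDnorm : ‖D‖ ≤ 1 := by
    have hb : ‖star D * D‖ ≤ 1 := by
      rw [hDD]
      refine norm_cfc_le zero_le_one fun t ht => ?_
      have ht0 : 0 ≤ t := spectrum_nonneg_of_nonneg hA0 ht
      have hmax : max t 0 = t := max_eq_left ht0
      have hval : myPhi (-(α/2)) ε t * (myPhi (-(1-α)) ε t * t * myPhi (-(α/2)) ε t)
          = t * myPhi (-1) ε t := by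
        have : myPhi (-(α/2)) ε t * (myPhi (-(1-α)) ε t * t * myPhi (-(α/2)) ε t)
            = myPhi (-(α/2)) ε t * myPhi (-(1-α)) ε t * myPhi (-(α/2)) ε t * t := by ring
        rw [this, myPhi_mul _ _ _ hε, myPhi_mul _ _ _ hε]
        have h5 : -(α/2) + -(1-α) + -(α/2) = (-1 : ℝ) := by ring
        rw [h5]; ring
      rw [hval, Real.norm_eq_abs]
      have hφ : myPhi (-1) ε t = (t + ε)⁻¹ := by
        rw [myPhi, hmax, Real.rpow_neg_one]
      rw [hφ, abs_of_nonneg (by positivity)]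
      rw [mul_inv_le_iff₀ (by positivity), one_mul]
      linarith
    have h6 : ‖D‖ * ‖D‖ ≤ 1 := by rw [← CStarRing.norm_star_mul_self]; exact hb
    nlinarith [norm_nonneg D]
  -- inner product estimates
  have hPb' : adjoint Pb = Pb := by rw [← star_eq_adjoint]; exact hPbsa.star_eq
  have hinner : (inner ℂ (T x) x : ℂ) = inner ℂ ((D * Pa) x) (Pb x) := by
    rw [← hfact]
    rw [ContinuousLinearMap.mul_apply, ← adjoint_inner_left, hPb']
  have hbound : ‖(inner ℂ (T x) x : ℂ)‖ ≤ ‖Pa x‖ * ‖Pb x‖ := by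
    rw [hinner]
    refine (norm_inner_le_norm _ _).trans ?_
    have h7 : ‖(D * Pa) x‖ ≤ ‖Pa x‖ := by
      rw [ContinuousLinearMap.mul_apply]
      refine (D.le_opNorm _).trans ?_
      calc ‖D‖ * ‖Pa x‖ ≤ 1 * ‖Pa x‖ := by gcongr
        _ = ‖Pa x‖ := one_mul _
    gcongr
  have hPra : ‖Pa x‖^2 = (inner ℂ (cfc (myPhi α ε) A x) x : ℂ).re := by
    have h8 : cfc (myPhi α ε) A = Pa * Pa := by
      rw [hPa, myCfc_phi_mul A hA _ _ hε]
      norm_num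
    have hPa' : adjoint Pa = Pa := by rw [← star_eq_adjoint]; exact hPasa.star_eq
    have h9 : (inner ℂ (Pa (Pa x)) x : ℂ) = inner ℂ (Pa x) (Pa x) := by
      nth_rewrite 1 [← hPa']
      rw [adjoint_inner_left]
    rw [h8, ContinuousLinearMap.mul_apply, h9]
    exact (inner_self_eq_norm_sq (𝕜 := ℂ) (Pa x)).symm
  have hPrb : ‖Pb x‖^2 = (inner ℂ (cfc (myPhi (1-α) ε) B x) x : ℂ).re := by
    have h8 : cfc (myPhi (1-α) ε) B = Pb * Pb := by
      rw [hPb, myCfc_phi_mul B hB _ _ hε]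
      norm_num
    have h9 : (inner ℂ (Pb (Pb x)) x : ℂ) = inner ℂ (Pb x) (Pb x) := by
      nth_rewrite 1 [← hPb']
      rw [adjoint_inner_left]
    rw [h8, ContinuousLinearMap.mul_apply, h9]
    exact (inner_self_eq_norm_sq (𝕜 := ℂ) (Pb x)).symm
  rw [← hPra, ← hPrb]
  nlinarith [hbound, sq_nonneg (‖Pa x‖ - ‖Pb x‖), norm_nonneg (Pa x), norm_nonneg (Pb x)]
lemma myRpow_add_le {β t ε : ℝ} (hβ0 : 0 ≤ β) (hβ1 : β ≤ 1) (ht : 0 ≤ t) (hε : 0 ≤ ε) :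
    (t + ε) ^ β ≤ t ^ β + ε ^ β := by
  have h := NNReal.rpow_add_le_add_rpow (Real.toNNReal t) (Real.toNNReal ε) hβ0 hβ1
  have hc : ((Real.toNNReal t + Real.toNNReal ε : ℝ≥0) : ℝ) = t + ε := by
    push_cast
    rw [Real.coe_toNNReal t ht, Real.coe_toNNReal ε hε]
  calc (t + ε) ^ β = (((Real.toNNReal t + Real.toNNReal ε : ℝ≥0) : ℝ)) ^ β := by rw [hc]
    _ = (((Real.toNNReal t + Real.toNNReal ε) ^ β : ℝ≥0) : ℝ) := by
        rw [NNReal.coe_rpow]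
    _ ≤ (((Real.toNNReal t) ^ β + (Real.toNNReal ε) ^ β : ℝ≥0) : ℝ) := by exact_mod_cast h
    _ = t ^ β + ε ^ β := by
        push_cast [NNReal.coe_rpow]
        rw [Real.coe_toNNReal t ht, Real.coe_toNNReal ε hε]

set_option maxHeartbeats 1000000 in
lemma myLimit (C : H →L[ℂ] H) (hC0 : (0:H →L[ℂ] H) ≤ C) {β ε : ℝ} (hβ0 : 0 ≤ β) (hβ1 : β ≤ 1)
    (hε : 0 < ε) (x : H) :
    (inner ℂ (cfc (myPhi β ε) C x) x : ℂ).re ≤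
      (inner ℂ (cfc (fun t : ℝ => t ^ β) C x) x : ℂ).re
        + (if β = 0 then 0 else ε ^ β) * ‖x‖ ^ 2 := by
  have hC : IsSelfAdjoint C := hC0.isSelfAdjoint
  rcases eq_or_lt_of_le hβ0 with hβz | hβpos
  · have h1 : cfc (myPhi β ε) C = 1 := by rw [← hβz]; exact myCfc_phi_zero C hC hε
    have h2 : cfc (fun t : ℝ => t ^ β) C = 1 := by
      have : cfc (fun t : ℝ => t ^ β) C = cfc (fun _ : ℝ => (1:ℝ)) C :=
        cfc_congr fun t _ => by rw [← hβz, Real.rpow_zero]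
      rw [this, cfc_const 1 C, map_one]
    rw [h1, h2, if_pos hβz.symm, zero_mul, add_zero]
  have hβne : ¬ β = 0 := ne_of_gt hβpos
  rw [if_neg hβne]
  have hcont : ContinuousOn (fun t : ℝ => t ^ β) (spectrum ℝ C) := by
    intro t ht
    exact (Real.continuousAt_rpow_const t β (Or.inr hβ0)).continuousWithinAt
  have hle : cfc (myPhi β ε) C ≤ cfc (fun t : ℝ => t ^ β + ε ^ β) C := by
    refine cfc_mono (hf := (myPhi_continuous β hε).continuousOn)
      (hg := hcont.add continuousOn_const) fun t ht => ?_
    have ht0 : 0 ≤ t := spectrum_nonneg_of_nonneg hC0 ht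
    rw [myPhi, max_eq_left ht0]
    exact myRpow_add_le hβ0 hβ1 ht0 hε.le
  have hsplit : cfc (fun t : ℝ => t ^ β + ε ^ β) C
      = cfc (fun t : ℝ => t ^ β) C + (ε ^ β) • (1 : H →L[ℂ] H) := by
    rw [cfc_add (a := C) _ _ hcont continuousOn_const, cfc_const (ε ^ β) C,
      Algebra.algebraMap_eq_smul_one]
  have h1 := myInner_mono hle x
  rw [hsplit] at h1
  refine h1.trans ?_
  rw [ContinuousLinearMap.add_apply, inner_add_left, Complex.add_re,
    ContinuousLinearMap.smul_apply, ContinuousLinearMap.one_apply]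
  have h2 : (inner ℂ ((ε ^ β) • x) x : ℂ).re = ε ^ β * ‖x‖ ^ 2 := by
    have e := inner_self_eq_norm_sq (𝕜 := ℂ) x
    simp only [RCLike.re_to_complex] at e
    have : ((ε ^ β) • x) = ((ε ^ β : ℝ) : ℂ) • x := by
      rw [Complex.coe_smul]
    rw [this, inner_smul_left, Complex.conj_ofReal, Complex.mul_re, Complex.ofReal_re,
      Complex.ofReal_im, e]
    ring
  rw [h2]

lemma myMixedCS (T : H →L[ℂ] H) {α : ℝ} (hα0 : 0 ≤ α) (hα1 : α ≤ 1) (x : H) :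
    ‖(inner ℂ (T x) x : ℂ)‖ ≤
      ((inner ℂ (cfc (fun t : ℝ => t ^ α) (adjoint T * T) x) x : ℂ).re
        + (inner ℂ (cfc (fun t : ℝ => t ^ (1 - α)) (T * adjoint T) x) x : ℂ).re) / 2 := by
  set A := adjoint T * T with hAdef
  set B := T * adjoint T with hBdef
  have hA0 : (0 : H →L[ℂ] H) ≤ A := by
    rw [hAdef, ← star_eq_adjoint]; exact star_mul_self_nonneg T
  have hB0 : (0 : H →L[ℂ] H) ≤ B := by
    rw [hBdef, ← star_eq_adjoint]; exact mul_star_self_nonneg T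
  set c : ℝ → ℝ := fun ε =>
    ((if α = 0 then 0 else ε ^ α) + (if 1 - α = 0 then 0 else ε ^ (1 - α))) * ‖x‖ ^ 2
    with hc
  have key : ∀ ε ∈ Set.Ioi (0:ℝ), ‖(inner ℂ (T x) x : ℂ)‖ ≤
      ((inner ℂ (cfc (fun t : ℝ => t ^ α) A x) x : ℂ).re
        + (inner ℂ (cfc (fun t : ℝ => t ^ (1 - α)) B x) x : ℂ).re + c ε) / 2 := by
    intro ε hε
    rw [Set.mem_Ioi] at hε
    refine (myStep T hα0 hα1 hε x).trans ?_
    have l1 := myLimit A hA0 hα0 hα1 hε x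
    have l2 := myLimit B hB0 (by linarith : (0:ℝ) ≤ 1 - α) (by linarith : 1 - α ≤ 1) hε x
    rw [hc]
    have hx2 : (0:ℝ) ≤ ‖x‖ ^ 2 := sq_nonneg _
    nlinarith [l1, l2]
  have hcz : Filter.Tendsto c (nhdsWithin 0 (Set.Ioi 0)) (nhds 0) := by
    have haux : ∀ β : ℝ, 0 ≤ β → Filter.Tendsto (fun ε : ℝ => if β = 0 then (0:ℝ) else ε ^ β)
        (nhdsWithin 0 (Set.Ioi 0)) (nhds 0) := by
      intro β hβ
      by_cases hβz : β = 0
      · simp [hβz, tendsto_const_nhds]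
      · simp only [if_neg hβz]
        have hco : ContinuousAt (fun ε : ℝ => ε ^ β) 0 :=
          Real.continuousAt_rpow_const 0 β (Or.inr hβ)
        have := hco.continuousWithinAt (s := Set.Ioi 0)
        rw [ContinuousWithinAt] at this
        have h0 : (0:ℝ) ^ β = 0 := Real.zero_rpow hβz
        rwa [h0] at this
      done
    have h1 := (haux α hα0).add (haux (1 - α) (by linarith))
    rw [add_zero] at h1
    have h2 := h1.mul_const (‖x‖ ^ 2)
    rwa [zero_mul] at h2
  set K : ℝ := (inner ℂ (cfc (fun t : ℝ => t ^ α) A x) x : ℂ).re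
        + (inner ℂ (cfc (fun t : ℝ => t ^ (1 - α)) B x) x : ℂ).re with hK
  have hlim : Filter.Tendsto (fun ε => (K + c ε) / 2)
      (nhdsWithin 0 (Set.Ioi 0)) (nhds (K / 2)) := by
    have h3 := ((tendsto_const_nhds (x := K)
      (f := nhdsWithin (0:ℝ) (Set.Ioi 0))).add hcz).div_const (2:ℝ)
    rwa [add_zero] at h3
  exact ge_of_tendsto hlim (Filter.eventually_of_mem self_mem_nhdsWithin key)
lemma myInner_real_smul_re (r : ℝ) (v x : H) :
    (inner ℂ (r • v) x : ℂ).re = r * (inner ℂ v x : ℂ).re := by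
  rw [show (r • v) = ((r : ℂ) • v) from (Complex.coe_smul r v).symm, inner_smul_left,
    Complex.conj_ofReal, Complex.mul_re, Complex.ofReal_re, Complex.ofReal_im]
  ring

lemma myInner_self_re (x : H) : (inner ℂ x x : ℂ).re = ‖x‖ ^ 2 := by
  have e := inner_self_eq_norm_sq (𝕜 := ℂ) x
  simpa using e

set_option maxHeartbeats 1000000 in
lemma myJensen (A : H →L[ℂ] H) (hA0 : (0:H →L[ℂ] H) ≤ A) (f : ℝ → ℝ)
    (hf_cont : ContinuousOn f (Set.Ici 0)) (hconv : ConvexOn ℝ (Set.Ici 0) f)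
    (hmono : MonotoneOn f (Set.Ici 0)) (x : H) (hx : ‖x‖ = 1) :
    f ((inner ℂ (A x) x : ℂ).re) ≤ (inner ℂ (cfc f A x) x : ℂ).re := by
  have hA : IsSelfAdjoint A := hA0.isSelfAdjoint
  have hspec : spectrum ℝ A ⊆ Set.Ici 0 := fun t ht =>
    spectrum_nonneg_of_nonneg hA0 ht
  have hfc : ContinuousOn f (spectrum ℝ A) := hf_cont.mono hspec
  set t₀ : ℝ := (inner ℂ (A x) x : ℂ).re with ht₀def
  have ht₀ : 0 ≤ t₀ := myInner_nonneg hA0 x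
  obtain ⟨c, hsub⟩ : ∃ c : ℝ, ∀ t ∈ Set.Ici (0:ℝ), f t₀ + c * (t - t₀) ≤ f t := by
    rcases eq_or_lt_of_le ht₀ with h0 | hpos
    · refine ⟨0, fun t ht => ?_⟩
      rw [zero_mul, add_zero, ← h0]
      exact hmono Set.self_mem_Ici ht ht
    · set S : Set ℝ := (fun u => (f u - f t₀) / (u - t₀)) '' Set.Ioi t₀ with hS
      have hne : S.Nonempty := ⟨_, ⟨t₀ + 1, by simp, rfl⟩⟩
      have hbdd : BddBelow S := by
        refine ⟨(f t₀ - f (t₀/2)) / (t₀ - t₀/2), ?_⟩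
        rintro s ⟨u, hu, rfl⟩
        rw [Set.mem_Ioi] at hu
        exact hconv.slope_mono_adjacent (Set.mem_Ici.mpr (by positivity) : t₀/2 ∈ Set.Ici (0:ℝ))
          (le_of_lt (lt_trans hpos hu) : u ∈ Set.Ici (0:ℝ)) (by linarith) hu
      refine ⟨sInf S, fun t ht => ?_⟩
      rw [Set.mem_Ici] at ht
      rcases lt_trichotomy t t₀ with hlt | heq | hgt
      · have hsl : (f t₀ - f t) / (t₀ - t) ≤ sInf S := by
          refine le_csInf hne ?_
          rintro s ⟨u, hu, rfl⟩
          rw [Set.mem_Ioi] at hu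
          exact hconv.slope_mono_adjacent ht (le_of_lt (lt_trans hpos hu)) hlt hu
        have h2 : f t₀ - f t ≤ sInf S * (t₀ - t) := by
          rw [div_le_iff₀ (by linarith : (0:ℝ) < t₀ - t)] at hsl
          linarith
        nlinarith
      · rw [heq]; simp
      · have hsl : sInf S ≤ (f t - f t₀) / (t - t₀) := csInf_le hbdd ⟨t, hgt, rfl⟩
        have h2 : sInf S * (t - t₀) ≤ f t - f t₀ := by
          rw [le_div_iff₀ (by linarith : (0:ℝ) < t - t₀)] at hsl
          linarith
        linarith
  have key : (0:H →L[ℂ] H) ≤ cfc (fun t => f t - (f t₀ + c * (t - t₀))) A :=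
    cfc_nonneg fun t ht => sub_nonneg.mpr (hsub t (hspec ht))
  have hsplit : cfc (fun t => f t - (f t₀ + c * (t - t₀))) A
      = cfc f A - ((f t₀ - c * t₀) • (1:H →L[ℂ] H) + c • A) := by
    have haff : ContinuousOn (fun t : ℝ => f t₀ + c * (t - t₀)) (spectrum ℝ A) :=
      (continuous_const.add (continuous_const.mul
        (continuous_id.sub continuous_const))).continuousOn
    rw [cfc_sub f (fun t => f t₀ + c * (t - t₀)) A hfc haff]
    congr 1
    have e1 : cfc (fun t : ℝ => f t₀ + c * (t - t₀)) A
        = cfc (fun t : ℝ => (f t₀ - c * t₀) + c * t) A := by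
      exact cfc_congr fun t _ => by ring
    rw [e1, cfc_const_add (f t₀ - c * t₀) (fun t : ℝ => c * t) A
      ((continuous_const.mul continuous_id).continuousOn),
      cfc_const_mul c (fun t : ℝ => t) A (continuous_id.continuousOn), cfc_id' ℝ A,
      Algebra.algebraMap_eq_smul_one]
  have h3 := myInner_nonneg key x
  rw [hsplit] at h3
  rw [ContinuousLinearMap.sub_apply, ContinuousLinearMap.add_apply,
    ContinuousLinearMap.smul_apply, ContinuousLinearMap.smul_apply,
    ContinuousLinearMap.one_apply, inner_sub_left, inner_add_left, Complex.sub_re,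
    Complex.add_re, myInner_real_smul_re, myInner_real_smul_re, myInner_self_re, hx] at h3
  rw [ht₀def] at hsub ⊢
  nlinarith [h3]
set_option maxHeartbeats 1000000 in
lemma mySide (C : H →L[ℂ] H) (hC0 : (0:H →L[ℂ] H) ≤ C) (f : ℝ → ℝ)
    (hf_cont : ContinuousOn f (Set.Ici 0)) (hconv : ConvexOn ℝ (Set.Ici 0) f)
    (hmono : MonotoneOn f (Set.Ici 0)) {β : ℝ} (hβ : 0 ≤ β) (x : H) (hx : ‖x‖ = 1) :
    f ((inner ℂ (cfc (fun t : ℝ => t ^ β) C x) x : ℂ).re) ≤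
      (inner ℂ (cfc (fun t : ℝ => f (t ^ β)) C x) x : ℂ).re := by
  have hC : IsSelfAdjoint C := hC0.isSelfAdjoint
  have hspec : spectrum ℝ C ⊆ Set.Ici 0 := fun t ht => spectrum_nonneg_of_nonneg hC0 ht
  have hcont_pow : ContinuousOn (fun t : ℝ => t ^ β) (spectrum ℝ C) := fun t ht =>
    (Real.continuousAt_rpow_const t β (Or.inr hβ)).continuousWithinAt
  set Cβ := cfc (fun t : ℝ => t ^ β) C with hCβ
  have hCβ0 : (0:H →L[ℂ] H) ≤ Cβ := by
    rw [hCβ]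
    exact cfc_nonneg fun t ht => Real.rpow_nonneg (hspec ht) β
  have hJ := myJensen Cβ hCβ0 f hf_cont hconv hmono x hx
  have himg : (fun t : ℝ => t ^ β) '' spectrum ℝ C ⊆ Set.Ici 0 := by
    rintro s ⟨t, ht, rfl⟩
    exact Set.mem_Ici.mpr (Real.rpow_nonneg (hspec ht) β)
  have hcomp : cfc f Cβ = cfc (fun t : ℝ => f (t ^ β)) C := by
    rw [hCβ, ← cfc_comp' f (fun t : ℝ => t ^ β) C (hf_cont.mono himg) hcont_pow]
  rw [hcomp] at hJ
  exact hJ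

set_option maxHeartbeats 1000000 in
lemma myPerOp (T : H →L[ℂ] H) (f : ℝ → ℝ)
    (hf_cont : ContinuousOn f (Set.Ici 0)) (hconv : ConvexOn ℝ (Set.Ici 0) f)
    (hmono : MonotoneOn f (Set.Ici 0)) {α : ℝ} (hα0 : 0 ≤ α) (hα1 : α ≤ 1)
    (x : H) (hx : ‖x‖ = 1) :
    f ‖(inner ℂ (T x) x : ℂ)‖ ≤
      ((inner ℂ (cfc (fun t : ℝ => f (t ^ α)) (adjoint T * T) x) x : ℂ).re
        + (inner ℂ (cfc (fun t : ℝ => f (t ^ (1 - α))) (T * adjoint T) x) x : ℂ).re) / 2 := by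
  set A := adjoint T * T with hAdef
  set B := T * adjoint T with hBdef
  have hA0 : (0 : H →L[ℂ] H) ≤ A := by
    rw [hAdef, ← star_eq_adjoint]; exact star_mul_self_nonneg T
  have hB0 : (0 : H →L[ℂ] H) ≤ B := by
    rw [hBdef, ← star_eq_adjoint]; exact mul_star_self_nonneg T
  have hspecA : spectrum ℝ A ⊆ Set.Ici 0 := fun t ht => spectrum_nonneg_of_nonneg hA0 ht
  have hspecB : spectrum ℝ B ⊆ Set.Ici 0 := fun t ht => spectrum_nonneg_of_nonneg hB0 ht
  set a : ℝ := (inner ℂ (cfc (fun t : ℝ => t ^ α) A x) x : ℂ).re with ha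
  set b : ℝ := (inner ℂ (cfc (fun t : ℝ => t ^ (1 - α)) B x) x : ℂ).re with hb
  have ha0 : 0 ≤ a :=
    myInner_nonneg (cfc_nonneg fun t ht => Real.rpow_nonneg (hspecA ht) α) x
  have hb0 : 0 ≤ b :=
    myInner_nonneg (cfc_nonneg fun t ht => Real.rpow_nonneg (hspecB ht) (1-α)) x
  have hm : ‖(inner ℂ (T x) x : ℂ)‖ ≤ (a + b) / 2 := myMixedCS T hα0 hα1 x
  have hmono1 : f ‖(inner ℂ (T x) x : ℂ)‖ ≤ f ((a + b) / 2) :=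
    hmono (Set.mem_Ici.mpr (norm_nonneg _)) (Set.mem_Ici.mpr (by positivity)) hm
  have hmid : f ((a + b) / 2) ≤ (f a + f b) / 2 := by
    have h := hconv.2 (Set.mem_Ici.mpr ha0) (Set.mem_Ici.mpr hb0)
      (by norm_num : (0:ℝ) ≤ 1/2) (by norm_num : (0:ℝ) ≤ 1/2) (by norm_num : (1:ℝ)/2 + 1/2 = 1)
    simp only [smul_eq_mul] at h
    calc f ((a + b) / 2) = f (1/2 * a + 1/2 * b) := by ring_nf
      _ ≤ 1/2 * f a + 1/2 * f b := h
      _ = (f a + f b) / 2 := by ring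
  have hsa := mySide A hA0 f hf_cont hconv hmono hα0 x hx
  have hsb := mySide B hB0 f hf_cont hconv hmono (by linarith : (0:ℝ) ≤ 1 - α) x hx
  rw [← ha] at hsa
  rw [← hb] at hsb
  linarith

end

set_option maxHeartbeats 1000000 in

/-- For `T₁, …, Tₙ ∈ B(H)`, `f : [0,∞) → [0,∞)` strictly increasing convex, and
`0 ≤ α ≤ 1`: for every unit vector `x`,
`∑ f |⟨Tⱼ x, x⟩| ≤ ⟨(∑ (f(|Tⱼ|^{2α}) + f(|Tⱼ*|^{2(1-α)}))/2) x, x⟩`,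
where `|Tⱼ|^{2α} = (Tⱼ*Tⱼ)^α` and `|Tⱼ*|^{2(1-α)} = (Tⱼ Tⱼ*)^{1-α}` are given by
continuous functional calculus. -/
theorem sum_f_inner_le_inner_cfc
    {H : Type*} [NormedAddCommGroup H] [InnerProductSpace ℂ H] [CompleteSpace H]
    (n : ℕ) (T : Fin n → H →L[ℂ] H)
    (f : ℝ → ℝ)
    (hf_cont : ContinuousOn f (Set.Ici 0))
    (hf_mono : StrictMonoOn f (Set.Ici 0))
    (hconv : ConvexOn ℝ (Set.Ici 0) f)
    (hnn : ∀ t ∈ Set.Ici (0 : ℝ), 0 ≤ f t)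
    (α : ℝ) (hα0 : 0 ≤ α) (hα1 : α ≤ 1)
    (x : H) (hx : ‖x‖ = 1) :
    ∑ j, f ‖(inner ℂ (T j x) x : ℂ)‖ ≤
      (inner ℂ ((∑ j, (2⁻¹ : ℝ) •
        (cfc (fun t : ℝ => f (t ^ α)) (ContinuousLinearMap.adjoint (T j) * T j) +
         cfc (fun t : ℝ => f (t ^ (1 - α))) (T j * ContinuousLinearMap.adjoint (T j)))) x)
        x : ℂ).re := by
  have hmono : MonotoneOn f (Set.Ici 0) := hf_mono.monotoneOn
  rw [ContinuousLinearMap.sum_apply, sum_inner, Complex.re_sum]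
  refine Finset.sum_le_sum fun j _ => ?_
  have hper := myPerOp (T j) f hf_cont hconv hmono hα0 hα1 x hx
  rw [ContinuousLinearMap.smul_apply, myInner_real_smul_re, ContinuousLinearMap.add_apply,
    inner_add_left, Complex.add_re]
  refine hper.trans ?_
  rw [div_eq_inv_mul]
end

section
/- Let T₁, …, Tₙ ∈ B(H) with Cartesian decompositions Tⱼ = Bⱼ + iCⱼ (Bⱼ, Cⱼ self-adjoint) and let f : [0,∞) → [0,∞) be a strictly increasing convex function with f(0) = 0. Then for every unit vector x ∈ H, ∑ⱼ f(|⟨Tⱼx, x⟩|) ≤ ⟨(∑ⱼ f(|Bⱼ| + |Cⱼ|)) x, x⟩; consequently ω_f(T₁, …, Tₙ) ≤ ‖f⁻¹(∑ⱼ f(|Bⱼ| + |Cⱼ|))‖. -/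
section Aux

lemma aux_subgrad {f : ℝ → ℝ} (hconv : ConvexOn ℝ (Set.Ici 0) f)
    (hmono : MonotoneOn f (Set.Ici 0)) {s₀ : ℝ} (hs₀ : 0 ≤ s₀) :
    ∃ a : ℝ, ∀ t ∈ Set.Ici (0:ℝ), f s₀ + a * (t - s₀) ≤ f t := by
  set Sl : Set ℝ := (fun u => (f u - f s₀) / (u - s₀)) '' Set.Ioi s₀ with hSl
  have hne : Sl.Nonempty := ⟨_, ⟨s₀ + 1, lt_add_one s₀, rfl⟩⟩
  have hbdd : ∀ y ∈ Sl, 0 ≤ y := by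
    rintro y ⟨u, hu, rfl⟩
    exact div_nonneg
      (by have := hmono (Set.mem_Ici.mpr hs₀) (le_of_lt (lt_of_le_of_lt hs₀ hu)) hu.le; linarith)
      (by simp only [Set.mem_Ioi] at hu; linarith)
  refine ⟨sInf Sl, fun t ht => ?_⟩
  simp only [Set.mem_Ici] at ht
  rcases lt_trichotomy t s₀ with hlt | rfl | hgt
  · have key : (f s₀ - f t) / (s₀ - t) ≤ sInf Sl := by
      refine le_csInf hne ?_
      rintro y ⟨u, hu, rfl⟩
      exact hconv.slope_mono_adjacent (Set.mem_Ici.mpr ht)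
        (Set.mem_Ici.mpr (le_of_lt (lt_of_le_of_lt hs₀ hu))) hlt hu
    rw [div_le_iff₀ (by linarith)] at key
    have : sInf Sl * (t - s₀) = -(sInf Sl * (s₀ - t)) := by ring
    linarith
  · simp
  · have key : sInf Sl ≤ (f t - f s₀) / (t - s₀) :=
      csInf_le ⟨0, hbdd⟩ ⟨t, hgt, rfl⟩
    rw [le_div_iff₀ (by linarith)] at key
    linarith

variable {H : Type*} [NormedAddCommGroup H] [InnerProductSpace ℂ H] [CompleteSpace H]

lemma aux_inner_mono {A B : H →L[ℂ] H} (h : A ≤ B) (x : H) :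
    (inner ℂ (A x) x : ℂ).re ≤ (inner ℂ (B x) x : ℂ).re := by
  have h2 := (ContinuousLinearMap.le_def A B).mp h |>.re_inner_nonneg_left x
  simp only [ContinuousLinearMap.sub_apply, inner_sub_left, map_sub,
    RCLike.re_to_complex] at h2
  linarith

lemma aux_inner_affine (A : H →L[ℂ] H) (a c : ℝ) {x : H} (hx : ‖x‖ = 1) :
    (inner ℂ (((a • A + c • (1:H →L[ℂ] H))) x) x : ℂ).re = a * (inner ℂ (A x) x : ℂ).re + c := by
  have hs : ∀ (r : ℝ) (v : H), (inner ℂ (r • v) x : ℂ) = (r:ℂ) * inner ℂ v x := by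
    intro r v
    rw [RCLike.real_smul_eq_coe_smul (K := ℂ), inner_smul_left, RCLike.conj_ofReal]
    norm_cast
  simp only [ContinuousLinearMap.add_apply, ContinuousLinearMap.smul_apply,
    ContinuousLinearMap.one_apply, inner_add_left, hs, Complex.add_re]
  rw [inner_self_eq_norm_sq_to_K (𝕜 := ℂ), hx]
  simp [Complex.ofReal_mul, Complex.mul_re]

lemma aux_jensen {f : ℝ → ℝ}
    (hf_cont : ContinuousOn f (Set.Ici 0))
    (hconv : ConvexOn ℝ (Set.Ici 0) f)
    (hmono : MonotoneOn f (Set.Ici 0))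
    (A : H →L[ℂ] H) (hA : 0 ≤ A) {x : H} (hx : ‖x‖ = 1) :
    f ((inner ℂ (A x) x : ℂ).re) ≤ (inner ℂ (cfc f A x) x : ℂ).re := by
  have hApos := (ContinuousLinearMap.nonneg_iff_isPositive A).mp hA
  have hAsa : IsSelfAdjoint A := hApos.isSelfAdjoint
  have hsp : spectrum ℝ A ⊆ Set.Ici 0 := fun t ht => spectrum_nonneg_of_nonneg hA ht
  set s₀ : ℝ := (inner ℂ (A x) x : ℂ).re with hs₀def
  have hs₀ : 0 ≤ s₀ := by
    have := hApos.re_inner_nonneg_left x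
    simpa [RCLike.re_to_complex] using this
  obtain ⟨a, ha⟩ := aux_subgrad hconv hmono hs₀
  set c : ℝ := f s₀ - a * s₀ with hcdef
  have heq : cfc (fun t : ℝ => a * t + c) A = a • A + c • (1:H →L[ℂ] H) := by
    rw [cfc_add A (fun t => a * t) (fun _ => c) (by fun_prop) (by fun_prop),
      cfc_const_mul_id a A hAsa, cfc_const c A hAsa, Algebra.algebraMap_eq_smul_one]
  have hle : cfc (fun t : ℝ => a * t + c) A ≤ cfc f A := by
    refine cfc_mono (fun t ht => ?_) (by fun_prop) (hf_cont.mono hsp)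
    have := ha t (hsp ht)
    simp only [hcdef]; linarith
  have := aux_inner_mono (heq ▸ hle) x
  rw [aux_inner_affine A a c hx] at this
  calc f s₀ = a * s₀ + c := by rw [hcdef]; ring
    _ ≤ (inner ℂ (cfc f A x) x : ℂ).re := this

lemma aux_abs_bound {B : H →L[ℂ] H} (hB : IsSelfAdjoint B) (x : H) :
    |(inner ℂ (B x) x : ℂ).re| ≤ (inner ℂ (cfc (fun t : ℝ => |t|) B x) x : ℂ).re := by
  have h1 : B ≤ cfc (fun t : ℝ => |t|) B := by
    calc B = cfc (fun t : ℝ => t) B := (cfc_id' ℝ B).symm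
      _ ≤ cfc (fun t : ℝ => |t|) B := cfc_mono fun t _ => le_abs_self t
  have h2 : -B ≤ cfc (fun t : ℝ => |t|) B := by
    calc -B = cfc (fun t : ℝ => -t) B := by rw [← cfc_neg_id (R := ℝ) B]
      _ ≤ cfc (fun t : ℝ => |t|) B := cfc_mono fun t _ => neg_le_abs t
  rw [abs_le]
  constructor
  · have := aux_inner_mono h2 x
    simp only [ContinuousLinearMap.neg_apply, inner_neg_left, Complex.neg_re] at this
    linarith
  · exact aux_inner_mono h1 x

lemma aux_selfadj_real {B : H →L[ℂ] H} (hB : IsSelfAdjoint B) (x : H) :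
    (inner ℂ (B x) x : ℂ) = ((inner ℂ (B x) x : ℂ).re : ℂ) := by
  have h : (starRingEnd ℂ) (inner ℂ (B x) x : ℂ) = (inner ℂ (B x) x : ℂ) := by
    rw [inner_conj_symm, ← ContinuousLinearMap.adjoint_inner_left, hB.adjoint_eq]
  rw [Complex.conj_eq_iff_re] at h
  exact h.symm

lemma aux_norm_mk (b c : ℝ) : ‖(⟨b, c⟩ : ℂ)‖ ≤ |b| + |c| := by
  rw [Complex.norm_def, Complex.normSq_mk]
  calc Real.sqrt (b * b + c * c) ≤ Real.sqrt ((|b| + |c|)^2) := by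
        apply Real.sqrt_le_sqrt
        nlinarith [abs_nonneg b, abs_nonneg c, abs_mul_abs_self b, abs_mul_abs_self c]
    _ = |b| + |c| := Real.sqrt_sq (by positivity)

end Aux

/-- For `Tⱼ = Bⱼ + iCⱼ` (Cartesian decompositions) and `f : [0,∞) → [0,∞)` strictly
increasing convex with `f 0 = 0` and inverse `finv`: for every unit vector `x`,
`∑ f |⟨Tⱼ x, x⟩| ≤ ⟨(∑ f(|Bⱼ| + |Cⱼ|)) x, x⟩`, and consequently
`ω_f (T₁, …, Tₙ) ≤ ‖f⁻¹(∑ f(|Bⱼ| + |Cⱼ|))‖`. -/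
theorem omega_f_le_norm_cfc_cartesian
    {H : Type*} [NormedAddCommGroup H] [InnerProductSpace ℂ H] [CompleteSpace H]
    (n : ℕ) (T B C : Fin n → H →L[ℂ] H)
    (hB : ∀ j, B j = (2⁻¹ : ℂ) • (T j + ContinuousLinearMap.adjoint (T j)))
    (hC : ∀ j, C j = ((2 * Complex.I)⁻¹ : ℂ) • (T j - ContinuousLinearMap.adjoint (T j)))
    (f finv : ℝ → ℝ)
    (hf_cont : ContinuousOn f (Set.Ici 0))
    (hf_mono : StrictMonoOn f (Set.Ici 0))
    (hconv : ConvexOn ℝ (Set.Ici 0) f)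
    (hnn : ∀ t ∈ Set.Ici (0 : ℝ), 0 ≤ f t)
    (hf0 : f 0 = 0)
    (hinv : ∀ t ∈ Set.Ici (0 : ℝ), finv (f t) = t)
    (hinv' : ∀ s ∈ Set.Ici (0 : ℝ), f (finv s) = s) :
    (∀ x : H, ‖x‖ = 1 →
      ∑ j, f ‖(inner ℂ (T j x) x : ℂ)‖ ≤
        (inner ℂ ((∑ j, cfc f (cfc (fun t : ℝ => |t|) (B j) + cfc (fun t : ℝ => |t|) (C j))) x)
          x : ℂ).re) ∧
    sSup {r : ℝ | ∃ y : H, ‖y‖ = 1 ∧ r = finv (∑ j, f ‖(inner ℂ (T j y) y : ℂ)‖)} ≤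
      ‖cfc finv (∑ j, cfc f (cfc (fun t : ℝ => |t|) (B j) + cfc (fun t : ℝ => |t|) (C j)))‖ := by
  have hmono := hf_mono.monotoneOn
  -- self-adjointness
  have hBsa : ∀ j, IsSelfAdjoint (B j) := by
    intro j
    rw [hB j, IsSelfAdjoint, star_smul, star_add]
    simp [ContinuousLinearMap.star_eq_adjoint, ContinuousLinearMap.adjoint_adjoint, add_comm]
  have hCsa : ∀ j, IsSelfAdjoint (C j) := by
    intro j
    rw [hC j, IsSelfAdjoint, star_smul, star_sub]
    simp only [ContinuousLinearMap.star_eq_adjoint, ContinuousLinearMap.adjoint_adjoint]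
    rw [show (star (2 * Complex.I)⁻¹ : ℂ) = -(2 * Complex.I)⁻¹ by
      have : (2 * Complex.I)⁻¹ = -2⁻¹ * Complex.I := by rw [mul_inv, Complex.inv_I]; ring
      rw [this]; simp [Complex.ext_iff]]
    rw [neg_smul, ← smul_neg, neg_sub]
  have hT : ∀ j, T j = B j + Complex.I • C j := by
    intro j
    rw [hB j, hC j, smul_smul]
    rw [show Complex.I * (2 * Complex.I)⁻¹ = 2⁻¹ by
      rw [mul_inv, ← mul_assoc, mul_comm Complex.I]; field_simp]
    module
  -- positivity of the absolute values
  set A : Fin n → (H →L[ℂ] H) :=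
    fun j => cfc (fun t : ℝ => |t|) (B j) + cfc (fun t : ℝ => |t|) (C j) with hAdef
  have hApos : ∀ j, 0 ≤ A j := fun j =>
    add_nonneg (cfc_nonneg fun t _ => abs_nonneg t) (cfc_nonneg fun t _ => abs_nonneg t)
  have hAspec : ∀ j, spectrum ℝ (A j) ⊆ Set.Ici 0 :=
    fun j t ht => spectrum_nonneg_of_nonneg (hApos j) ht
  -- Part 1
  have part1 : ∀ x : H, ‖x‖ = 1 →
      ∑ j, f ‖(inner ℂ (T j x) x : ℂ)‖ ≤ (inner ℂ ((∑ j, cfc f (A j)) x) x : ℂ).re := by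
    intro x hx
    have key : ∀ j, f ‖(inner ℂ (T j x) x : ℂ)‖ ≤ (inner ℂ (cfc f (A j) x) x : ℂ).re := by
      intro j
      set b : ℝ := (inner ℂ (B j x) x : ℂ).re
      set c : ℝ := (inner ℂ (C j x) x : ℂ).re
      have hbB := aux_abs_bound (hBsa j) x
      have hcC := aux_abs_bound (hCsa j) x
      have hzeq : (inner ℂ (T j x) x : ℂ) = ⟨b, -c⟩ := by
        rw [hT j]
        simp only [ContinuousLinearMap.add_apply, ContinuousLinearMap.smul_apply,
          inner_add_left, inner_smul_left]
        rw [aux_selfadj_real (hBsa j) x, aux_selfadj_real (hCsa j) x]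
        simp [Complex.ext_iff]
        exact ⟨rfl, rfl⟩
      have hn1 : ‖(inner ℂ (T j x) x : ℂ)‖ ≤ |b| + |c| := by
        rw [hzeq]
        simpa using aux_norm_mk b (-c)
      have hs₀ : (inner ℂ (A j x) x : ℂ).re =
          (inner ℂ (cfc (fun t : ℝ => |t|) (B j) x) x : ℂ).re +
          (inner ℂ (cfc (fun t : ℝ => |t|) (C j) x) x : ℂ).re := by
        simp [hAdef, ContinuousLinearMap.add_apply, inner_add_left]
      have hn2 : ‖(inner ℂ (T j x) x : ℂ)‖ ≤ (inner ℂ (A j x) x : ℂ).re := by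
        rw [hs₀]; linarith
      have hs₀nn : (0:ℝ) ≤ (inner ℂ (A j x) x : ℂ).re := by
        have := ((ContinuousLinearMap.nonneg_iff_isPositive (A j)).mp (hApos j)).re_inner_nonneg_left x
        simpa [RCLike.re_to_complex] using this
      calc f ‖(inner ℂ (T j x) x : ℂ)‖ ≤ f ((inner ℂ (A j x) x : ℂ).re) :=
            hmono (Set.mem_Ici.mpr (norm_nonneg _)) (Set.mem_Ici.mpr hs₀nn) hn2
        _ ≤ (inner ℂ (cfc f (A j) x) x : ℂ).re :=
            aux_jensen hf_cont hconv hmono (A j) (hApos j) hx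
    calc ∑ j, f ‖(inner ℂ (T j x) x : ℂ)‖ ≤ ∑ j, (inner ℂ (cfc f (A j) x) x : ℂ).re :=
          Finset.sum_le_sum fun j _ => key j
      _ = (inner ℂ ((∑ j, cfc f (A j)) x) x : ℂ).re := by
          rw [ContinuousLinearMap.sum_apply, sum_inner]
          simp [Complex.re_sum]
  refine ⟨part1, ?_⟩
  -- Part 2
  -- facts about finv
  have hf1 : 0 < f 1 := by
    have := hf_mono (Set.mem_Ici.mpr le_rfl) (Set.mem_Ici.mpr zero_le_one) zero_lt_one
    rwa [hf0] at this
  have hsurj : ∀ s : ℝ, 0 ≤ s → ∃ t : ℝ, 0 ≤ t ∧ f t = s := by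
    intro s hs
    set M : ℝ := max 1 (s / f 1) with hMdef
    have hM1 : (1:ℝ) ≤ M := le_max_left _ _
    have hgrow : M * f 1 ≤ f M := by
      have h0M : (0:ℝ) ≤ M := by linarith
      have hMpos : (0:ℝ) < M := by linarith
      have ha' : (0:ℝ) ≤ 1 - 1/M := by
        have : 1/M ≤ 1 := by rw [div_le_one hMpos]; exact hM1
        linarith
      have hb' : (0:ℝ) ≤ 1/M := by positivity
      have hab : (1 - 1/M) + 1/M = 1 := by ring
      have hc := hconv.2 (Set.mem_Ici.mpr (le_refl (0:ℝ))) (Set.mem_Ici.mpr h0M) ha' hb' hab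
      simp only [smul_eq_mul, mul_zero, zero_add, hf0] at hc
      rw [one_div, inv_mul_cancel₀ (ne_of_gt hMpos)] at hc
      calc M * f 1 ≤ M * (M⁻¹ * f M) := by
            exact mul_le_mul_of_nonneg_left hc (by linarith)
        _ = f M := by field_simp
    have hsM : s ≤ f M := by
      have h2 : s / f 1 ≤ M := le_max_right _ _
      have := mul_le_mul_of_nonneg_right h2 (le_of_lt hf1)
      rw [div_mul_cancel₀ _ (ne_of_gt hf1)] at this
      linarith
    have hIVT := intermediate_value_Icc (by linarith : (0:ℝ) ≤ M)
      (hf_cont.mono (Set.Icc_subset_Ici_self))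
    have hmem : s ∈ Set.Icc (f 0) (f M) := by rw [hf0]; exact ⟨hs, hsM⟩
    obtain ⟨t, ht, hft⟩ := hIVT hmem
    exact ⟨t, ht.1, hft⟩
  have hfinv_nn : ∀ s : ℝ, 0 ≤ s → 0 ≤ finv s := by
    intro s hs
    obtain ⟨t, ht, rfl⟩ := hsurj s hs
    rw [hinv t (Set.mem_Ici.mpr ht)]; exact ht
  have hfinv_mono : MonotoneOn finv (Set.Ici 0) := by
    rintro s hs s' hs' hss
    obtain ⟨t, ht, rfl⟩ := hsurj s hs
    obtain ⟨t', ht', rfl⟩ := hsurj s' hs'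
    rw [hinv t (Set.mem_Ici.mpr ht), hinv t' (Set.mem_Ici.mpr ht')]
    exact (hf_mono.le_iff_le (Set.mem_Ici.mpr ht) (Set.mem_Ici.mpr ht')).mp hss
  have hfinv_cont : ContinuousOn finv (Set.Ici 0) := by
    set F : ℝ → ℝ := fun s => if s ≤ 0 then s else finv s with hFdef
    have hF0 : F 0 = 0 := by simp [hFdef]
    have hFfinv : ∀ s ∈ Set.Ici (0:ℝ), finv s = F s := by
      intro s hs
      simp only [hFdef]
      rcases eq_or_lt_of_le (Set.mem_Ici.mp hs) with h | h
      · rw [← h, if_pos le_rfl]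
        have := hinv 0 (Set.mem_Ici.mpr le_rfl)
        rw [hf0] at this; rw [this]
      · rw [if_neg (by linarith)]
    have hFmono : Monotone F := by
      intro s t hst
      simp only [hFdef]
      rcases le_or_gt s 0 with hs | hs
      · rcases le_or_gt t 0 with ht | ht
        · rw [if_pos hs, if_pos ht]; exact hst
        · rw [if_pos hs, if_neg (by linarith)]
          exact le_trans hs (hfinv_nn t ht.le)
      · rw [if_neg (by linarith), if_neg (by linarith)]
        exact hfinv_mono (Set.mem_Ici.mpr hs.le) (Set.mem_Ici.mpr (by linarith)) hst
    have hFsurj : Function.Surjective F := by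
      intro y
      rcases le_or_gt y 0 with hy | hy
      · exact ⟨y, by simp [hFdef, hy]⟩
      · refine ⟨f y, ?_⟩
        have hfy : 0 < f y := by
          have := hf_mono (Set.mem_Ici.mpr le_rfl) (Set.mem_Ici.mpr hy.le) hy
          rwa [hf0] at this
        simp only [hFdef, if_neg (not_le.mpr hfy)]
        exact hinv y (Set.mem_Ici.mpr hy.le)
    have hFcont : Continuous F := hFmono.continuous_of_surjective hFsurj
    exact (hFcont.continuousOn).congr hFfinv
  -- the bound
  refine Real.sSup_le ?_ (norm_nonneg _)
  rintro r ⟨y, hy, rfl⟩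
  have hyne : y ≠ 0 := by intro h; rw [h, norm_zero] at hy; exact zero_ne_one hy
  haveI : Nontrivial H := ⟨⟨y, 0, hyne⟩⟩
  haveI : Nontrivial (H →L[ℂ] H) := ⟨⟨1, 0, fun h => hyne (by
    have := ContinuousLinearMap.ext_iff.mp h y
    simpa using this)⟩⟩
  set S : H →L[ℂ] H := ∑ j, cfc f (A j) with hSdef
  have hfnnA : ∀ j, 0 ≤ cfc f (A j) :=
    fun j => cfc_nonneg fun t ht => hnn t (hAspec j ht)
  have hSpos : 0 ≤ S := Finset.sum_nonneg fun j _ => hfnnA j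
  have hSsa : IsSelfAdjoint S := ((ContinuousLinearMap.nonneg_iff_isPositive S).mp hSpos).isSelfAdjoint
  have hSspec : spectrum ℝ S ⊆ Set.Ici 0 := fun t ht => spectrum_nonneg_of_nonneg hSpos ht
  set s : ℝ := ∑ j, f ‖(inner ℂ (T j y) y : ℂ)‖ with hsdef
  have hs0 : 0 ≤ s := Finset.sum_nonneg fun j _ => hnn _ (Set.mem_Ici.mpr (norm_nonneg _))
  have h1 : s ≤ (inner ℂ (S y) y : ℂ).re := part1 y hy
  have h2 : (inner ℂ (S y) y : ℂ).re ≤ ‖S‖ := by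
    calc (inner ℂ (S y) y : ℂ).re ≤ ‖(inner ℂ (S y) y : ℂ)‖ := Complex.re_le_norm _
      _ ≤ ‖S y‖ * ‖y‖ := norm_inner_le_norm _ _
      _ ≤ ‖S‖ * ‖y‖ * ‖y‖ := by
          apply mul_le_mul_of_nonneg_right (S.le_opNorm y) (norm_nonneg y)
      _ = ‖S‖ := by rw [hy]; ring
  have hnormS : (0:ℝ) ≤ ‖S‖ := norm_nonneg S
  have h3 : finv s ≤ finv ‖S‖ :=
    hfinv_mono (Set.mem_Ici.mpr hs0) (Set.mem_Ici.mpr hnormS) (le_trans h1 h2)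
  have h4 : ‖S‖ ∈ spectrum ℝ S := CStarAlgebra.norm_mem_spectrum_of_nonneg hSpos
  have h5 : |finv ‖S‖| ≤ ‖cfc finv S‖ := by
    have := norm_apply_le_norm_cfc finv S h4 (hfinv_cont.mono hSspec) hSsa
    simpa [Real.norm_eq_abs] using this
  calc finv s ≤ finv ‖S‖ := h3
    _ ≤ |finv ‖S‖| := le_abs_self _
    _ ≤ ‖cfc finv S‖ := h5
end

section
/- Generalized Euclidean radius bound via Cartesian decomposition: for T₁, …, Tₙ ∈ B(H), the Euclidean operator radius ω_e(T₁, …, Tₙ) = sup_{‖x‖=1}(∑ⱼ |⟨Tⱼx,x⟩|²)^{1/2} satisfies ω_e(T₁,…,Tₙ)² ≤ (1/2)‖∑ⱼ (Tⱼ*Tⱼ + TⱼTⱼ*)‖. -/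
open ContinuousLinearMap in
lemma key_pointwise {H : Type*} [NormedAddCommGroup H] [InnerProductSpace ℂ H]
    [CompleteSpace H] (A : H →L[ℂ] H) (y : H) (hy : ‖y‖ = 1) :
    ‖(inner ℂ (A y) y : ℂ)‖ ^ 2 ≤ 2⁻¹ * (‖A y‖ ^ 2 + ‖(adjoint A) y‖ ^ 2) := by
  set u := A y with hu
  set v := (adjoint A) y with hv
  have hvy : (inner ℂ v y : ℂ) = inner ℂ y u := ContinuousLinearMap.adjoint_inner_left A y y
  have hc : (inner ℂ y u : ℂ) = starRingEnd ℂ (inner ℂ u y) := (inner_conj_symm y u).symm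
  have hre : (inner ℂ u y : ℂ).re = ((inner ℂ (u + v) y : ℂ)).re / 2 := by
    rw [inner_add_left, hvy, hc, Complex.add_re, Complex.conj_re]
    ring
  have him : (inner ℂ u y : ℂ).im = ((inner ℂ (u - v) y : ℂ)).im / 2 := by
    rw [inner_sub_left, hvy, hc, Complex.sub_im, Complex.conj_im]
    ring
  have h1 : |((inner ℂ (u + v) y : ℂ)).re| ≤ ‖u + v‖ := by
    calc |((inner ℂ (u + v) y : ℂ)).re| ≤ ‖(inner ℂ (u + v) y : ℂ)‖ := Complex.abs_re_le_norm _
    _ ≤ ‖u + v‖ * ‖y‖ := norm_inner_le_norm _ _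
    _ = ‖u + v‖ := by rw [hy, mul_one]
  have h2 : |((inner ℂ (u - v) y : ℂ)).im| ≤ ‖u - v‖ := by
    calc |((inner ℂ (u - v) y : ℂ)).im| ≤ ‖(inner ℂ (u - v) y : ℂ)‖ := Complex.abs_im_le_norm _
    _ ≤ ‖u - v‖ * ‖y‖ := norm_inner_le_norm _ _
    _ = ‖u - v‖ := by rw [hy, mul_one]
  have hnorm : ‖(inner ℂ u y : ℂ)‖ ^ 2 = (inner ℂ u y : ℂ).re ^ 2 + (inner ℂ u y : ℂ).im ^ 2 := by
    rw [Complex.sq_norm, Complex.normSq_apply]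
    ring
  have hpar : ‖u + v‖ ^ 2 + ‖u - v‖ ^ 2 = 2 * (‖u‖ ^ 2 + ‖v‖ ^ 2) := by
    have := parallelogram_law_with_norm ℂ u v
    nlinarith [this]
  have h1' : ((inner ℂ (u + v) y : ℂ)).re ^ 2 ≤ ‖u + v‖ ^ 2 := by
    rw [← sq_abs]; exact pow_le_pow_left₀ (abs_nonneg _) h1 2
  have h2' : ((inner ℂ (u - v) y : ℂ)).im ^ 2 ≤ ‖u - v‖ ^ 2 := by
    rw [← sq_abs]; exact pow_le_pow_left₀ (abs_nonneg _) h2 2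
  rw [hnorm, hre, him]
  nlinarith [h1', h2']

open ContinuousLinearMap in
lemma key_sum {H : Type*} [NormedAddCommGroup H] [InnerProductSpace ℂ H]
    [CompleteSpace H] (n : ℕ) (T : Fin n → H →L[ℂ] H) (y : H) (hy : ‖y‖ = 1) :
    (∑ j, ‖(inner ℂ (T j y) y : ℂ)‖ ^ 2) ≤
      2⁻¹ * ‖∑ j, (adjoint (T j) * T j + T j * adjoint (T j))‖ := by
  set S := ∑ j, (adjoint (T j) * T j + T j * adjoint (T j)) with hS
  have step1 : (∑ j, ‖(inner ℂ (T j y) y : ℂ)‖ ^ 2) ≤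
      2⁻¹ * ∑ j, (‖T j y‖ ^ 2 + ‖(adjoint (T j)) y‖ ^ 2) := by
    rw [Finset.mul_sum]
    exact Finset.sum_le_sum fun j _ => key_pointwise (T j) y hy
  have hSapp : S y = ∑ j, ((adjoint (T j)) (T j y) + (T j) ((adjoint (T j)) y)) := by
    rw [hS, ContinuousLinearMap.sum_apply]
    rfl
  have step2 : (∑ j, (‖T j y‖ ^ 2 + ‖(adjoint (T j)) y‖ ^ 2)) = (inner ℂ (S y) y : ℂ).re := by
    rw [hSapp, sum_inner, Complex.re_sum]
    refine Finset.sum_congr rfl fun j _ => ?_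
    rw [inner_add_left]
    have e1 : (inner ℂ ((adjoint (T j)) (T j y)) y : ℂ) = inner ℂ (T j y) (T j y) :=
      ContinuousLinearMap.adjoint_inner_left _ _ _
    have e2 : (inner ℂ ((T j) ((adjoint (T j)) y)) y : ℂ)
        = inner ℂ ((adjoint (T j)) y) ((adjoint (T j)) y) := by
      have h := ContinuousLinearMap.adjoint_inner_left (adjoint (T j))
        y ((adjoint (T j)) y)
      rwa [ContinuousLinearMap.adjoint_adjoint] at h
    rw [e1, e2, inner_self_eq_norm_sq_to_K, inner_self_eq_norm_sq_to_K]
    norm_cast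
  have step3 : (inner ℂ (S y) y : ℂ).re ≤ ‖S‖ := by
    calc (inner ℂ (S y) y : ℂ).re ≤ ‖(inner ℂ (S y) y : ℂ)‖ := Complex.re_le_norm _
    _ ≤ ‖S y‖ * ‖y‖ := norm_inner_le_norm _ _
    _ ≤ ‖S‖ * ‖y‖ * ‖y‖ := by gcongr; exact S.le_opNorm y
    _ = ‖S‖ := by rw [hy]; ring
  calc (∑ j, ‖(inner ℂ (T j y) y : ℂ)‖ ^ 2)
      ≤ 2⁻¹ * ∑ j, (‖T j y‖ ^ 2 + ‖(adjoint (T j)) y‖ ^ 2) := step1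
  _ = 2⁻¹ * (inner ℂ (S y) y : ℂ).re := by rw [step2]
  _ ≤ 2⁻¹ * ‖S‖ := by linarith [step3]

/-- The Euclidean operator radius `ω_e (T₁, …, Tₙ)` satisfies
`ω_e (T₁, …, Tₙ)² ≤ (1/2) ‖∑ (Tⱼ* Tⱼ + Tⱼ Tⱼ*)‖`. -/
theorem euclidean_radius_sq_le
    {H : Type*} [NormedAddCommGroup H] [InnerProductSpace ℂ H] [CompleteSpace H]
    (n : ℕ) (T : Fin n → H →L[ℂ] H) :
    (sSup {r : ℝ | ∃ y : H, ‖y‖ = 1 ∧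
        r = Real.sqrt (∑ j, ‖(inner ℂ (T j y) y : ℂ)‖ ^ 2)}) ^ 2 ≤
      2⁻¹ * ‖∑ j, (ContinuousLinearMap.adjoint (T j) * T j +
        T j * ContinuousLinearMap.adjoint (T j))‖ := by
  set M := 2⁻¹ * ‖∑ j, (ContinuousLinearMap.adjoint (T j) * T j +
        T j * ContinuousLinearMap.adjoint (T j))‖ with hM
  have hM0 : 0 ≤ M := by positivity
  set s := {r : ℝ | ∃ y : H, ‖y‖ = 1 ∧
        r = Real.sqrt (∑ j, ‖(inner ℂ (T j y) y : ℂ)‖ ^ 2)} with hs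
  have hub : sSup s ≤ Real.sqrt M := by
    apply Real.sSup_le
    · rintro r ⟨y, hy, rfl⟩
      exact Real.sqrt_le_sqrt (key_sum n T y hy)
    · exact Real.sqrt_nonneg M
  have hnn : 0 ≤ sSup s := by
    apply Real.sSup_nonneg
    rintro r ⟨y, hy, rfl⟩
    exact Real.sqrt_nonneg _
  calc (sSup s) ^ 2 ≤ (Real.sqrt M) ^ 2 := by gcongr
  _ = M := Real.sq_sqrt hM0
end

section
/- Kittaneh's inequality as the n = 1 case: for any T ∈ B(H), ω(T)² ≤ (1/2)‖T*T + TT*‖, where ω is the numerical radius. -/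
open ContinuousLinearMap Complex

/-- Kittaneh's inequality: `ω(T)² ≤ (1/2) ‖T*T + TT*‖`. -/
theorem numericalRadius_sq_le_kittaneh
    {H : Type*} [NormedAddCommGroup H] [InnerProductSpace ℂ H] [CompleteSpace H]
    (T : H →L[ℂ] H) :
    (sSup {r : ℝ | ∃ y : H, ‖y‖ = 1 ∧ r = ‖(inner ℂ (T y) y : ℂ)‖}) ^ 2 ≤
      2⁻¹ * ‖ContinuousLinearMap.adjoint T * T + T * ContinuousLinearMap.adjoint T‖ := by
  set M : ℝ := ‖ContinuousLinearMap.adjoint T * T + T * ContinuousLinearMap.adjoint T‖ with hM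
  have hM0 : (0:ℝ) ≤ 2⁻¹ * M := by positivity
  set S := {r : ℝ | ∃ y : H, ‖y‖ = 1 ∧ r = ‖(inner ℂ (T y) y : ℂ)‖} with hS
  have key : ∀ r ∈ S, r ^ 2 ≤ 2⁻¹ * M := by
    rintro r ⟨y, hy, rfl⟩
    set z : ℂ := inner ℂ (T y) y with hz
    have hconj : (starRingEnd ℂ) z = inner ℂ (ContinuousLinearMap.adjoint T y) y := by
      rw [adjoint_inner_left, ← inner_conj_symm]
    have hsum : (inner ℂ ((T + ContinuousLinearMap.adjoint T) y) y : ℂ)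
        = z + (starRingEnd ℂ) z := by
      rw [add_apply, inner_add_left, hconj]
    have hdiff : (inner ℂ ((T - ContinuousLinearMap.adjoint T) y) y : ℂ)
        = z - (starRingEnd ℂ) z := by
      rw [sub_apply, inner_sub_left, hconj]
    -- bound on real part
    have h1 : ‖z + (starRingEnd ℂ) z‖ ≤ ‖T y + ContinuousLinearMap.adjoint T y‖ := by
      calc ‖z + (starRingEnd ℂ) z‖
          = ‖(inner ℂ ((T + ContinuousLinearMap.adjoint T) y) y : ℂ)‖ := by rw [hsum]
        _ ≤ ‖(T + ContinuousLinearMap.adjoint T) y‖ * ‖y‖ := norm_inner_le_norm _ _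
        _ = ‖T y + ContinuousLinearMap.adjoint T y‖ := by rw [hy, add_apply, mul_one]
    have h2 : ‖z - (starRingEnd ℂ) z‖ ≤ ‖T y - ContinuousLinearMap.adjoint T y‖ := by
      calc ‖z - (starRingEnd ℂ) z‖
          = ‖(inner ℂ ((T - ContinuousLinearMap.adjoint T) y) y : ℂ)‖ := by rw [hdiff]
        _ ≤ ‖(T - ContinuousLinearMap.adjoint T) y‖ * ‖y‖ := norm_inner_le_norm _ _
        _ = ‖T y - ContinuousLinearMap.adjoint T y‖ := by rw [hy, sub_apply, mul_one]
    have hre : |2 * z.re| ≤ ‖T y + ContinuousLinearMap.adjoint T y‖ := by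
      have : (z + (starRingEnd ℂ) z).re = 2 * z.re := by simp [Complex.add_re]; ring
      calc |2 * z.re| = |(z + (starRingEnd ℂ) z).re| := by rw [this]
        _ ≤ ‖z + (starRingEnd ℂ) z‖ := Complex.abs_re_le_norm _
        _ ≤ _ := h1
    have him : |2 * z.im| ≤ ‖T y - ContinuousLinearMap.adjoint T y‖ := by
      have : (z - (starRingEnd ℂ) z).im = 2 * z.im := by simp [Complex.sub_im]; ring
      calc |2 * z.im| = |(z - (starRingEnd ℂ) z).im| := by rw [this]
        _ ≤ ‖z - (starRingEnd ℂ) z‖ := Complex.abs_im_le_norm _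
        _ ≤ _ := h2
    -- parallelogram law
    have hpar : ‖T y + ContinuousLinearMap.adjoint T y‖ * ‖T y + ContinuousLinearMap.adjoint T y‖
        + ‖T y - ContinuousLinearMap.adjoint T y‖ * ‖T y - ContinuousLinearMap.adjoint T y‖
        = 2 * (‖T y‖ * ‖T y‖ + ‖ContinuousLinearMap.adjoint T y‖ * ‖ContinuousLinearMap.adjoint T y‖) :=
      by have h := parallelogram_law_with_norm ℂ (T y) (ContinuousLinearMap.adjoint T y); rw [sq, sq, sq, sq] at h; exact h
    -- norm sum bound
    have hns : ‖T y‖ ^ 2 + ‖ContinuousLinearMap.adjoint T y‖ ^ 2 ≤ M := by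
      have e1 : (inner ℂ ((ContinuousLinearMap.adjoint T) (T y)) y : ℂ)
          = (‖T y‖ : ℂ) ^ 2 := by
        rw [adjoint_inner_left, inner_self_eq_norm_sq_to_K]; norm_cast
      have e2 : (inner ℂ (T ((ContinuousLinearMap.adjoint T) y)) y : ℂ)
          = (‖ContinuousLinearMap.adjoint T y‖ : ℂ) ^ 2 := by
        rw [← adjoint_inner_right, inner_self_eq_norm_sq_to_K]; norm_cast
      have heq : (‖T y‖ ^ 2 + ‖ContinuousLinearMap.adjoint T y‖ ^ 2 : ℝ)
          = ((inner ℂ ((ContinuousLinearMap.adjoint T * T + T * ContinuousLinearMap.adjoint T) y) y : ℂ)).re := by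
        rw [add_apply, ContinuousLinearMap.mul_apply, ContinuousLinearMap.mul_apply, inner_add_left, e1, e2]
        norm_cast
      calc ‖T y‖ ^ 2 + ‖ContinuousLinearMap.adjoint T y‖ ^ 2
          = ((inner ℂ ((ContinuousLinearMap.adjoint T * T + T * ContinuousLinearMap.adjoint T) y) y : ℂ)).re := heq
        _ ≤ ‖(inner ℂ ((ContinuousLinearMap.adjoint T * T + T * ContinuousLinearMap.adjoint T) y) y : ℂ)‖ :=
            Complex.re_le_norm _
        _ ≤ ‖(ContinuousLinearMap.adjoint T * T + T * ContinuousLinearMap.adjoint T) y‖ * ‖y‖ :=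
            norm_inner_le_norm _ _
        _ ≤ M := by
            rw [hy, mul_one]
            exact ((ContinuousLinearMap.adjoint T * T + T * ContinuousLinearMap.adjoint T).le_opNorm y).trans
              (by rw [hy, mul_one])
    have ha : (2 * z.re) * (2 * z.re)
        ≤ ‖T y + ContinuousLinearMap.adjoint T y‖ * ‖T y + ContinuousLinearMap.adjoint T y‖ := by
      have h := mul_self_le_mul_self (abs_nonneg _) hre
      rwa [abs_mul_abs_self] at h
    have hb : (2 * z.im) * (2 * z.im)
        ≤ ‖T y - ContinuousLinearMap.adjoint T y‖ * ‖T y - ContinuousLinearMap.adjoint T y‖ := by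
      have h := mul_self_le_mul_self (abs_nonneg _) him
      rwa [abs_mul_abs_self] at h
    have hns' : ‖T y‖ * ‖T y‖ + ‖ContinuousLinearMap.adjoint T y‖ * ‖ContinuousLinearMap.adjoint T y‖ ≤ M := by
      rw [pow_two, pow_two] at hns; exact hns
    have hz2 : ‖z‖ ^ 2 = z.re * z.re + z.im * z.im := by
      rw [Complex.sq_norm, Complex.normSq_apply]
    show ‖z‖ ^ 2 ≤ 2⁻¹ * M
    linarith [ha, hb, hpar, hns', hz2]
  -- conclude via sSup
  rcases Set.eq_empty_or_nonempty S with hSe | hSne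
  · rw [hSe, Real.sSup_empty]
    simpa using hM0
  · have hub : ∀ r ∈ S, r ≤ Real.sqrt (2⁻¹ * M) := by
      intro r hr
      have hr0 : 0 ≤ r := by obtain ⟨y, hy, rfl⟩ := hr; positivity
      exact (Real.le_sqrt hr0 hM0).mpr (key r hr)
    have hsup_le : sSup S ≤ Real.sqrt (2⁻¹ * M) := Real.sSup_le hub (Real.sqrt_nonneg _)
    have hsup0 : 0 ≤ sSup S := by
      obtain ⟨r, hr⟩ := hSne
      have hr0 : 0 ≤ r := by obtain ⟨y, hy, rfl⟩ := hr; positivity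
      exact hr0.trans (le_csSup ⟨Real.sqrt (2⁻¹ * M), hub⟩ hr)
    calc (sSup S) ^ 2 ≤ Real.sqrt (2⁻¹ * M) ^ 2 := by
          exact pow_le_pow_left₀ hsup0 hsup_le 2
      _ = 2⁻¹ * M := Real.sq_sqrt hM0
end
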